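/- arXiv:math/0601563 — 2 statements merged into one kernel-verified Lean document; each statement's English description precedes it below -/
import Mathlib

section
/- Let (W,S) be a Coxeter system acting by additive automorphisms on an abelian group V. A family (v_s)_{s∈S} of elements of V is of the form (f(s))_{s∈S} for some 1-cocycle f : W → V if and only if: (i) v_s + s·v_s = 0 for all s ∈ S, and (ii) for every pair of distinct s,t ∈ S such that the subgroup W_{{s,t}} generated by s and t is finite, Σ_{x∈W_{{s,t}}, ℓ(xs)>ℓ(x)} (−1)^{ℓ(x)} x·v_s = Σ_{x∈W_{{s,t}}, ℓ(xt)>ℓ(x)} (−1)^{ℓ(x)} x·v_t. Moreover such a 1-cocycle f is unique, and f is a 1-coboundary if and only if there exists v ∈ V with v_s = v − s·v for all s ∈ S. -/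
/-!
A 1-cocycle `f` with `f (s i) = v i` amounts to a section `w ↦ (f w, w)` of `V ⋊ W → W` sending
`s i` to `xᵢ = (v i, s i)`. By the Coxeter presentation such a section exists iff the `xᵢ` satisfy
the Coxeter relations, and it is unique because the `s i` generate `W`. For `c = s i * s i'` of
order `d` (which divides `M i i'`), `(xᵢ xᵢ')^d = (∑_{k<d} c^k • (v i + s i • v i'), 1)`, so the
relations amount to the vanishing of these sums.

In the dihedral group `⟨s, t⟩ = ⟨c⟩ ⊔ ⟨c⟩ s`, the ascent set of `s` and the set `⟨c⟩` both pick
one element from each pair `{x, x s}`, and the ascent set of `t` and `⟨c⟩ s` one from each pair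
`{x, x t}`. Once `s • v_s = -v_s`, the summand `(-1)^ℓ(x) x • v_s` is constant on these pairs, so
the two sides of (ii) differ by exactly `∑_{k<d} c^k • (v_s + s • v_t)`, the sign `(-1)^ℓ` being
`1` on `⟨c⟩` and `-1` on `⟨c⟩ s`.
-/

open Multiplicative

namespace groupCohomology

section MulAction

variable {G A : Type*} [Group G] [AddCommGroup A] [MulAction G A]

theorem isCocycle₁_iff_map_mul {f : G → A} :
    IsCocycle₁ f ↔ ∀ g h : G, f (g * h) = f g + g • f h :=
  forall₂_congr fun _ _ => by rw [add_comm]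

theorem IsCocycle₁.map_pow {f : G → A} (hf : IsCocycle₁ f) (g : G) (n : ℕ) :
    f (g ^ n) = ∑ k ∈ Finset.range n, g ^ k • f g := by
  induction n with
  | zero => simp [map_one_of_isCocycle₁ hf]
  | succ n ih => rw [pow_succ, hf, ih, Finset.sum_range_succ, add_comm]

theorem IsCocycle₁.eqOn_closure {f f' : G → A} (hf : IsCocycle₁ f) (hf' : IsCocycle₁ f')
    {S : Set G} (h : S.EqOn f f') : (Subgroup.closure S : Set G).EqOn f f' := by
  intro x hx
  induction hx using Subgroup.closure_induction with
  | mem x hx => exact h hx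
  | one => rw [map_one_of_isCocycle₁ hf, map_one_of_isCocycle₁ hf']
  | mul x y _ _ hx hy => rw [hf, hf', hx, hy]
  | inv x _ hx =>
    exact smul_left_cancel x (by rw [map_inv_of_isCocycle₁ hf, map_inv_of_isCocycle₁ hf', hx])

end MulAction

theorem isCocycle₁_smul_sub {G A : Type*} [Group G] [AddCommGroup A] [DistribMulAction G A]
    (m : A) : IsCocycle₁ fun g : G => g • m - m := fun g h => by
  simp only [mul_smul, smul_sub]
  abel

end groupCohomology

open groupCohomology

section SemidirectProduct

variable (G A : Type*) [Group G] [AddCommGroup A] [DistribMulAction G A]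

/-- `A ⋊ G` is realised as `Multiplicative A ⋊[smulMulAut G A] G`. -/
def smulMulAut : G →* MulAut (Multiplicative A) :=
  (MulAutMultiplicative A).symm.toMonoidHom.comp (DistribMulAction.toAddAut G A)

variable {G A}

theorem SemidirectProduct.mk_ofAdd_mul_mk_ofAdd (a b : A) (g h : G) :
    (⟨ofAdd a, g⟩ * ⟨ofAdd b, h⟩ : Multiplicative A ⋊[smulMulAut G A] G) =
      ⟨ofAdd (a + g • b), g * h⟩ :=
  rfl

theorem SemidirectProduct.mk_ofAdd_pow (a : A) (g : G) (n : ℕ) :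
    (⟨ofAdd a, g⟩ : Multiplicative A ⋊[smulMulAut G A] G) ^ n =
      ⟨ofAdd (∑ k ∈ Finset.range n, g ^ k • a), g ^ n⟩ := by
  induction n with
  | zero => ext <;> simp
  | succ n ih =>
    rw [pow_succ, ih, mk_ofAdd_mul_mk_ofAdd, Finset.sum_range_succ, pow_succ]

theorem isCocycle₁_toAdd_left {ψ : G →* Multiplicative A ⋊[smulMulAut G A] G}
    (hψ : ∀ g, (ψ g).right = g) : IsCocycle₁ fun g => toAdd (ψ g).left := fun g h => by
  show toAdd (ψ (g * h)).left = g • toAdd (ψ h).left + toAdd (ψ g).left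
  rw [map_mul, SemidirectProduct.mul_left, hψ, toAdd_mul, add_comm]
  rfl

end SemidirectProduct

section Transversal

variable {α M : Type*} [AddCommMonoid M]

theorem finsum_mem_eq_of_transversals {σ : α → α} (hσ : σ.Involutive) {f : α → M}
    (hf : ∀ x, f (σ x) = f x) {D A K : Set α} (hAD : A ⊆ D) (hKD : K ⊆ D)
    (hA : ∀ x ∈ D, x ∈ A ↔ σ x ∉ A) (hK : ∀ x ∈ D, x ∈ K ↔ σ x ∉ K) :
    ∑ᶠ x ∈ A, f x = ∑ᶠ x ∈ K, f x := by
  classical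
  have hAK : ∀ x ∈ A, x ∉ K → σ x ∈ K := fun x hx hxK => by
    simpa using mt (hK x (hAD hx)).2 hxK
  have hKA : ∀ x ∈ K, x ∉ A → σ x ∈ A := fun x hx hxA => by
    simpa using mt (hA x (hKD hx)).2 hxA
  refine finsum_mem_eq_of_bijOn (fun x => if x ∈ K then x else σ x)
    (Set.InvOn.bijOn (f' := fun x => if x ∈ A then x else σ x) ⟨?_, ?_⟩ ?_ ?_) ?_
  · intro x hx
    by_cases hxK : x ∈ K
    · simp [hxK, hx]
    · simp [hxK, (hA x (hAD hx)).1 hx, hσ x]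
  · intro x hx
    by_cases hxA : x ∈ A
    · simp [hxA, hx]
    · simp [hxA, (hK x (hKD hx)).1 hx, hσ x]
  · intro x hx
    by_cases hxK : x ∈ K
    · simp [hxK]
    · simp [hxK, hAK x hx hxK]
  · intro x hx
    by_cases hxA : x ∈ A
    · simp [hxA]
    · simp [hxA, hKA x hx hxA]
  · intro x _
    split_ifs <;> simp [hf]

end Transversal

section Zpowers

variable {G : Type*} [Group G]

theorem finsum_mem_zpowers {M : Type*} [AddCommMonoid M] {c : G} (hc : IsOfFinOrder c)
    (F : G → M) :
    ∑ᶠ y ∈ (Subgroup.zpowers c : Set G), F y = ∑ k ∈ Finset.range (orderOf c), F (c ^ k) := by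
  classical
  have : (Subgroup.zpowers c : Set G) = ((Finset.range (orderOf c)).image (c ^ ·) : Finset G) :=
    Set.ext fun y => hc.mem_zpowers_iff_mem_range_orderOf
  rw [this, finsum_mem_coe_finset, Finset.sum_image]
  intro k hk l hl
  exact pow_injOn_Iio_orderOf (by simpa using hk) (by simpa using hl)

variable {s t : G}

theorem mul_mul_mem_zpowers_mul (hs : s * s = 1) (ht : t * t = 1) {z : G}
    (hz : z ∈ Subgroup.zpowers (s * t)) : s * z * s ∈ Subgroup.zpowers (s * t) := by
  obtain ⟨k, rfl⟩ := hz
  have hs' : s⁻¹ = s := inv_eq_of_mul_eq_one_right hs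
  have hconj : s * (s * t) * s⁻¹ = (s * t)⁻¹ := by
    rw [mul_inv_rev, inv_eq_of_mul_eq_one_right ht, hs', ← mul_assoc, hs, one_mul]
  rw [show s * (s * t) ^ k * s = (s * (s * t) * s⁻¹) ^ k by rw [conj_zpow, hs'], hconj, inv_zpow]
  exact inv_mem (Subgroup.zpow_mem_zpowers _ _)

theorem mem_zpowers_or_mul_mem_zpowers_of_mem_closure_pair (hs : s * s = 1) (ht : t * t = 1)
    {x : G} (hx : x ∈ Subgroup.closure {s, t}) :
    x ∈ Subgroup.zpowers (s * t) ∨ x * s ∈ Subgroup.zpowers (s * t) := by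
  set C := Subgroup.zpowers (s * t)
  have mul_left_s : ∀ y, y ∈ C ∨ y * s ∈ C → s * y ∈ C ∨ s * y * s ∈ C := by
    rintro y (hy | hy)
    · exact Or.inr (mul_mul_mem_zpowers_mul hs ht hy)
    · left
      simpa [mul_assoc, hs] using mul_mul_mem_zpowers_mul hs ht hy
  have mul_left_t : ∀ y, y ∈ C ∨ y * s ∈ C → t * y ∈ C ∨ t * y * s ∈ C := by
    intro y hy
    have hc : s * t ∈ C := Subgroup.mem_zpowers _
    have := mul_left_s (s * t * y) (by
      rwa [C.mul_mem_cancel_left hc, mul_assoc, C.mul_mem_cancel_left hc])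
    simpa [← mul_assoc, hs] using this
  have mul_left : ∀ a ∈ ({s, t} : Set G), ∀ y, y ∈ C ∨ y * s ∈ C → a * y ∈ C ∨ a * y * s ∈ C := by
    rintro a (ha | ha) y hy
    · exact ha ▸ mul_left_s y hy
    · exact (Set.mem_singleton_iff.1 ha) ▸ mul_left_t y hy
  induction hx using Subgroup.closure_induction_left with
  | one => exact Or.inl (one_mem _)
  | mul_left a ha y _ hy => exact mul_left a ha y hy
  | inv_mul_cancel a ha y _ hy =>
    have ha' : a⁻¹ = a := by
      rcases ha with ha | ha
      · exact ha ▸ inv_eq_of_mul_eq_one_right hs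
      · exact (Set.mem_singleton_iff.1 ha) ▸ inv_eq_of_mul_eq_one_right ht
    rw [ha']
    exact mul_left a ha y hy

theorem finite_closure_pair (hs : s * s = 1) (ht : t * t = 1) (hst : IsOfFinOrder (s * t)) :
    (Subgroup.closure {s, t} : Set G).Finite := by
  have hC := hst.finite_zpowers
  refine (hC.union (hC.preimage (mul_left_injective s).injOn)).subset fun x hx => ?_
  exact mem_zpowers_or_mul_mem_zpowers_of_mem_closure_pair hs ht hx

end Zpowers

namespace CoxeterSystem

variable {B W : Type*} [Group W] {M : CoxeterMatrix B} (cs : CoxeterSystem M W)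

noncomputable def lengthSign : W →* ℤˣ where
  toFun w := (-1) ^ cs.length w
  map_one' := by simp
  map_mul' u w := by
    rw [← pow_add, Int.units_pow_eq_pow_mod_two, cs.length_mul_mod_two,
      ← Int.units_pow_eq_pow_mod_two]

theorem coe_lengthSign (w : W) : (cs.lengthSign w : ℤ) = (-1) ^ cs.length w := by
  simp [lengthSign]

theorem lengthSign_simple (i : B) : cs.lengthSign (cs.simple i) = -1 := by
  simp [lengthSign, length_simple]

theorem lengthSign_eq_one_of_mem_zpowers {i i' : B} {z : W}
    (hz : z ∈ Subgroup.zpowers (cs.simple i * cs.simple i')) : cs.lengthSign z = 1 := by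
  obtain ⟨k, rfl⟩ := hz
  simp [lengthSign_simple]

theorem simple_notMem_zpowers (i i' : B) :
    cs.simple i ∉ Subgroup.zpowers (cs.simple i * cs.simple i') := fun h => by
  have := cs.lengthSign_eq_one_of_mem_zpowers h
  rw [lengthSign_simple] at this
  exact absurd this (by decide)

theorem neg_one_pow_length_mul_simple (w : W) (i : B) :
    (-1 : ℤ) ^ cs.length (w * cs.simple i) = -(-1) ^ cs.length w := by
  rw [← coe_lengthSign, ← coe_lengthSign, map_mul, lengthSign_simple]
  simp

theorem lt_length_mul_simple_iff (w : W) (i : B) :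
    cs.length w < cs.length (w * cs.simple i) ↔
      ¬ cs.length (w * cs.simple i) < cs.length (w * cs.simple i * cs.simple i) := by
  rw [simple_mul_simple_cancel_right]
  have := cs.length_mul_simple_ne w i
  omega

theorem isCocycle₁_ext {V : Type*} [AddCommGroup V] [MulAction W V] {f f' : W → V}
    (hf : IsCocycle₁ f) (hf' : IsCocycle₁ f')
    (h : ∀ i, f (cs.simple i) = f' (cs.simple i)) : f = f' :=
  funext fun w => hf.eqOn_closure hf' (S := Set.range cs.simple) (by rintro _ ⟨i, rfl⟩; exact h i)
    (by rw [cs.subgroup_closure_range_simple]; trivial)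

variable {V : Type*} [AddCommGroup V] [DistribMulAction W V]

noncomputable def ascentSum (D : Subgroup W) (i : B) (u : V) : V :=
  ∑ᶠ x ∈ {x : W | x ∈ D ∧ cs.length x < cs.length (x * cs.simple i)},
    ((-1 : ℤ) ^ cs.length x) • (x • u)

theorem ascentSum_eq_finsum_of_transversal {D : Subgroup W} {i : B} (hi : cs.simple i ∈ D)
    {u : V} (hu : cs.simple i • u = -u) {K : Set W} (hKD : K ⊆ D)
    (hK : ∀ x ∈ D, x ∈ K ↔ x * cs.simple i ∉ K) :
    cs.ascentSum D i u = ∑ᶠ x ∈ K, ((-1 : ℤ) ^ cs.length x) • (x • u) :=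
  finsum_mem_eq_of_transversals (σ := (· * cs.simple i))
    (fun _ => cs.simple_mul_simple_cancel_right i)
    (fun x => by
      simp only [neg_one_pow_length_mul_simple, mul_smul, hu, neg_smul, smul_neg, neg_neg])
    (fun _ hx => hx.1) hKD
    (fun x hx => (and_iff_right hx).trans <| (cs.lt_length_mul_simple_iff x i).trans <|
      not_congr (and_iff_right (D.mul_mem hx hi)).symm)
    hK

theorem ascentSum_sub_ascentSum {i i' : B} (hc : IsOfFinOrder (cs.simple i * cs.simple i'))
    {u u' : V} (hu : cs.simple i • u = -u) (hu' : cs.simple i' • u' = -u') :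
    cs.ascentSum (Subgroup.closure {cs.simple i, cs.simple i'}) i u -
        cs.ascentSum (Subgroup.closure {cs.simple i, cs.simple i'}) i' u' =
      ∑ k ∈ Finset.range (orderOf (cs.simple i * cs.simple i')),
        (cs.simple i * cs.simple i') ^ k • (u + cs.simple i • u') := by
  set s := cs.simple i
  set t := cs.simple i'
  set D := Subgroup.closure {s, t}
  set C := Subgroup.zpowers (s * t)
  have hsD : s ∈ D := Subgroup.subset_closure (by simp)
  have htD : t ∈ D := Subgroup.subset_closure (by simp)
  have hCD : (C : Set W) ⊆ D := Subgroup.zpowers_le.2 (D.mul_mem hsD htD)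
  have hsign : ∀ y ∈ C, (-1 : ℤ) ^ cs.length y = 1 := fun y hy => by
    rw [← coe_lengthSign, cs.lengthSign_eq_one_of_mem_zpowers hy, Units.val_one]
  have hdich : ∀ x ∈ D, x ∈ C ↔ x * s ∉ C := fun x hx =>
    ⟨fun h h' => cs.simple_notMem_zpowers i i' (by simpa using C.mul_mem (C.inv_mem h) h'),
      fun h => (mem_zpowers_or_mul_mem_zpowers_of_mem_closure_pair (cs.simple_mul_simple_self i)
        (cs.simple_mul_simple_self i') hx).resolve_right h⟩
  have hsum_s : cs.ascentSum D i u = ∑ᶠ y ∈ (C : Set W), y • u := by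
    rw [cs.ascentSum_eq_finsum_of_transversal hsD hu hCD hdich]
    exact finsum_mem_congr rfl fun y hy => by rw [hsign y hy, one_smul]
  have hts : t * s = (s * t)⁻¹ := by
    rw [mul_inv_rev, cs.inv_simple, cs.inv_simple]
  have hsum_t : cs.ascentSum D i' u' = ∑ᶠ y ∈ (C : Set W), -(y • s • u') := by
    rw [cs.ascentSum_eq_finsum_of_transversal htD hu' (K := (· * s) ⁻¹' C)
      (fun x hx => (D.mul_mem_cancel_right hsD).1 (hCD hx))
      (fun x hx => by
        rw [Set.mem_preimage, Set.mem_preimage, mul_assoc, show cs.simple i' * s = _ from hts,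
          SetLike.mem_coe, SetLike.mem_coe,
          C.mul_mem_cancel_right (C.inv_mem (Subgroup.mem_zpowers _))]
        have := hdich x hx
        tauto)]
    symm
    refine finsum_mem_eq_of_bijOn (· * s)
      (Set.InvOn.bijOn (f' := (· * s)) ⟨fun y _ => ?_, fun y _ => ?_⟩ (fun y hy => ?_)
        fun y hy => hy) fun y hy => ?_
    · exact cs.simple_mul_simple_cancel_right i
    · exact cs.simple_mul_simple_cancel_right i
    · simpa [s] using hy
    · rw [neg_one_pow_length_mul_simple, hsign y hy, mul_smul]
      simp
  rw [hsum_s, hsum_t, ← finsum_mem_sub_distrib _ _ hc.finite_zpowers, finsum_mem_zpowers hc]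
  simp [smul_add]

theorem exists_smul_sub_iff {f : W → V} (hf : IsCocycle₁ f) :
    (∃ m : V, ∀ w, f w = w • m - m) ↔ ∃ m : V, ∀ i, f (cs.simple i) = m - cs.simple i • m := by
  refine ⟨fun ⟨m, hm⟩ => ⟨-m, fun i => ?_⟩, fun ⟨m, hm⟩ => ⟨-m, fun w => ?_⟩⟩
  · rw [hm, smul_neg, sub_neg_eq_add, neg_add_eq_sub]
  · refine congrFun (cs.isCocycle₁_ext hf (isCocycle₁_smul_sub (-m)) fun i => ?_) w
    rw [hm, smul_neg, sub_neg_eq_add, neg_add_eq_sub]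

theorem exists_isCocycle₁_of_isLiftable {v : B → V}
    (hv : M.IsLiftable fun i =>
      (⟨ofAdd (v i), cs.simple i⟩ : Multiplicative V ⋊[smulMulAut W V] W)) :
    ∃ f : W → V, IsCocycle₁ f ∧ ∀ i, f (cs.simple i) = v i := by
  set ψ := cs.lift ⟨_, hv⟩
  have hψ : SemidirectProduct.rightHom.comp ψ = MonoidHom.id W :=
    cs.ext_simple fun i => by simp [ψ]
  exact ⟨_, isCocycle₁_toAdd_left (DFunLike.congr_fun hψ), fun i => by simp [ψ]⟩

theorem exists_isCocycle₁_iff (v : B → V) :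
    (∃ f : W → V, IsCocycle₁ f ∧ ∀ i, f (cs.simple i) = v i) ↔
      ∀ i i', IsOfFinOrder (cs.simple i * cs.simple i') →
        ∑ k ∈ Finset.range (orderOf (cs.simple i * cs.simple i')),
          (cs.simple i * cs.simple i') ^ k • (v i + cs.simple i • v i') = 0 := by
  refine ⟨?_, fun h => cs.exists_isCocycle₁_of_isLiftable fun i i' => ?_⟩
  · rintro ⟨f, hf, hfv⟩ i i' -
    rw [← hfv, ← hfv, add_comm, ← hf, ← hf.map_pow, pow_orderOf_eq_one, map_one_of_isCocycle₁ hf]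
  rcases eq_or_ne (M i i') 0 with hM | hM
  · rw [hM, pow_zero]
  have hpow := cs.simple_mul_simple_pow i i'
  have hc : IsOfFinOrder (cs.simple i * cs.simple i') :=
    isOfFinOrder_iff_pow_eq_one.2 ⟨_, Nat.pos_of_ne_zero hM, hpow⟩
  refine orderOf_dvd_iff_pow_eq_one.1 (dvd_trans ?_ (orderOf_dvd_of_pow_eq_one hpow))
  refine orderOf_dvd_of_pow_eq_one ?_
  rw [SemidirectProduct.mk_ofAdd_mul_mk_ofAdd, SemidirectProduct.mk_ofAdd_pow, h i i' hc,
    pow_orderOf_eq_one]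
  rfl

theorem forall_sum_pow_smul_eq_zero_iff (v : B → V) :
    (∀ i i', IsOfFinOrder (cs.simple i * cs.simple i') →
        ∑ k ∈ Finset.range (orderOf (cs.simple i * cs.simple i')),
          (cs.simple i * cs.simple i') ^ k • (v i + cs.simple i • v i') = 0) ↔
      (∀ i, v i + cs.simple i • v i = 0) ∧
        ∀ i i', i ≠ i' → (Subgroup.closure {cs.simple i, cs.simple i'} : Set W).Finite →
          cs.ascentSum (Subgroup.closure {cs.simple i, cs.simple i'}) i (v i) =
            cs.ascentSum (Subgroup.closure {cs.simple i, cs.simple i'}) i' (v i') := by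
  have hdiag : ∀ i, IsOfFinOrder (cs.simple i * cs.simple i) ∧
      ∑ k ∈ Finset.range (orderOf (cs.simple i * cs.simple i)),
        (cs.simple i * cs.simple i) ^ k • (v i + cs.simple i • v i) = v i + cs.simple i • v i :=
    fun i => by simp [cs.simple_mul_simple_self]
  have hneg : ∀ i, v i + cs.simple i • v i = 0 → cs.simple i • v i = -v i :=
    fun i => eq_neg_of_add_eq_zero_right
  constructor
  · intro h
    have hv : ∀ i, v i + cs.simple i • v i = 0 := fun i => (hdiag i).2 ▸ h i i (hdiag i).1
    refine ⟨hv, fun i i' _ hfin => sub_eq_zero.1 ?_⟩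
    have hc := finite_zpowers.1 (hfin.subset (Subgroup.zpowers_le.2
      (mul_mem (Subgroup.subset_closure (Set.mem_insert _ _))
        (Subgroup.subset_closure (Set.mem_insert_of_mem _ rfl)))))
    rw [cs.ascentSum_sub_ascentSum hc (hneg i (hv i)) (hneg i' (hv i'))]
    exact h i i' hc
  · rintro ⟨hv, hasc⟩ i i' hc
    rcases eq_or_ne i i' with rfl | hne
    · exact (hdiag i).2.trans (hv i)
    rw [← cs.ascentSum_sub_ascentSum hc (hneg i (hv i)) (hneg i' (hv i')), sub_eq_zero]
    exact hasc i i' hne (finite_closure_pair (cs.simple_mul_simple_self i)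
      (cs.simple_mul_simple_self i') hc)

end CoxeterSystem

/-- Let `(W,S)` be a Coxeter system acting by additive automorphisms on an abelian group `V`,
and let `(v_s)_{s∈S}` be a family of elements of `V`.  Then:
(1) there is a 1-cocycle `f : W → V` with `f(s) = v_s` for all `s ∈ S` iff
    `v_s + s·v_s = 0` for all `s`, and for all distinct `s,t` generating a finite subgroup,
    `Σ_{x, ℓ(xs)>ℓ(x)} (-1)^{ℓ(x)} x·v_s = Σ_{x, ℓ(xt)>ℓ(x)} (-1)^{ℓ(x)} x·v_t`;
(2) such a 1-cocycle is unique;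
(3) such a 1-cocycle is a 1-coboundary iff there is `m ∈ V` with `v_s = m - s·m` for all `s`. -/
theorem cocycle_extension_criterion
    {B : Type*} {W : Type*} [Group W] {M : CoxeterMatrix B} (cs : CoxeterSystem M W)
    {V : Type*} [AddCommGroup V] [DistribMulAction W V] (v : B → V) :
    ((∃ f : W → V, (∀ g h : W, f (g * h) = f g + g • f h) ∧
        ∀ b : B, f (cs.simple b) = v b) ↔
      ((∀ b : B, v b + cs.simple b • v b = 0) ∧
       (∀ b b' : B, b ≠ b' →
        ((Subgroup.closure {cs.simple b, cs.simple b'} : Subgroup W) : Set W).Finite →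
        (∑ᶠ x ∈ {x : W | x ∈ Subgroup.closure {cs.simple b, cs.simple b'} ∧
              cs.length x < cs.length (x * cs.simple b)},
            ((-1 : ℤ) ^ cs.length x) • (x • v b)) =
        (∑ᶠ x ∈ {x : W | x ∈ Subgroup.closure {cs.simple b, cs.simple b'} ∧
              cs.length x < cs.length (x * cs.simple b')},
            ((-1 : ℤ) ^ cs.length x) • (x • v b'))))) ∧
    (∀ f g : W → V, (∀ x y : W, f (x * y) = f x + x • f y) →
      (∀ x y : W, g (x * y) = g x + x • g y) →
      (∀ b : B, f (cs.simple b) = g (cs.simple b)) → f = g) ∧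
    (∀ f : W → V, (∀ x y : W, f (x * y) = f x + x • f y) →
      (∀ b : B, f (cs.simple b) = v b) →
      ((∃ m : V, ∀ w : W, f w = w • m - m) ↔
       (∃ m : V, ∀ b : B, v b = m - cs.simple b • m))) := by
  simp only [← isCocycle₁_iff_map_mul]
  refine ⟨(cs.exists_isCocycle₁_iff v).trans (cs.forall_sum_pow_smul_eq_zero_iff v),
    fun f g hf hg => cs.isCocycle₁_ext hf hg, fun f hf hfv => ?_⟩
  simp only [← hfv]
  exact cs.exists_smul_sub_iff hf
end

section
/- Let J be a proper subset of I and let W_J be the subgroup of W generated by {s_i}_{i∈J}. Then H^1(W_J, ℤ[P]) = 0; that is, every 1-cocycle f : W_J → ℤ[P] is a 1-coboundary. -/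
open scoped BigOperators

namespace AffineKM

/-- An indecomposable generalized Cartan matrix of affine type, together with a
choice of positive integers `(a_i)` and `(a_i^∨)` annihilating it on the right
and on the left. -/
structure AffineData (I : Type) [Fintype I] [DecidableEq I] where
  a : I → I → ℤ
  apos : I → ℤ
  avee : I → ℤ
  diag : ∀ i, a i i = 2
  offdiag_nonpos : ∀ i j, i ≠ j → a i j ≤ 0
  zero_iff : ∀ i j, a i j = 0 ↔ a j i = 0
  connected : ∀ s : Set I, s.Nonempty → sᶜ.Nonempty → ∃ i ∈ s, ∃ j ∈ sᶜ, a i j ≠ 0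
  apos_pos : ∀ i, 0 < apos i
  avee_pos : ∀ i, 0 < avee i
  row_zero : ∀ i, (∑ j, a i j * apos j) = 0
  col_zero : ∀ j, (∑ i, avee i * a i j) = 0

variable {I : Type} [Fintype I] [DecidableEq I]

/-- The group structure on `AddAut A` (composition) that older Mathlib provided. -/
instance addAutGroupComp (A : Type) [Add A] : Group (AddAut A) where
  mul g h := AddEquiv.trans h g
  one := AddEquiv.refl _
  inv := AddEquiv.symm
  mul_assoc _ _ _ := rfl
  one_mul _ := rfl
  mul_one _ := rfl
  inv_mul_cancel := AddEquiv.self_trans_symm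

/-- The weight lattice `P`, free on the `Λ_i` and the `α_i`: the first component
records the coordinates with respect to the basis `{Λ_i}`, the second component the
coordinates with respect to the basis `{α_i}`. -/
abbrev P (I : Type) := (I → ℤ) × (I → ℤ)

/-- The fundamental weight `Λ_i`. -/
def Lambda (i : I) : P I := (Pi.single i 1, 0)

/-- The simple root `α_i`. -/
def alphaRt (i : I) : P I := (0, Pi.single i 1)

/-- A weight lies in `Q = ⊕ ℤα_i` iff its `Λ`-coordinates vanish. -/
def inQ (lam : P I) : Prop := lam.1 = 0

namespace AffineData

variable (D : AffineData I)

/-- The pairing `⟨h_i, λ⟩` with the simple coroot `h_i`. -/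
def coroot (i : I) (lam : P I) : ℤ := lam.1 i + ∑ j, D.a i j * lam.2 j

lemma coroot_add (i : I) (x y : P I) :
    D.coroot i (x + y) = D.coroot i x + D.coroot i y := by
  simp only [coroot, Prod.fst_add, Prod.snd_add, Pi.add_apply, mul_add,
    Finset.sum_add_distrib]
  ring

lemma coroot_zsmul (i : I) (z : ℤ) (x : P I) :
    D.coroot i (z • x) = z * D.coroot i x := by
  simp only [coroot, Prod.smul_fst, Prod.smul_snd, Pi.smul_apply, smul_eq_mul,
    mul_add, Finset.mul_sum]
  congr 1
  apply Finset.sum_congr rfl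
  intro j _
  ring

lemma coroot_alpha_self (i : I) : D.coroot i (alphaRt i) = 2 := by
  simp only [coroot, alphaRt, Pi.zero_apply, zero_add]
  rw [Finset.sum_eq_single i]
  · simp [D.diag]
  · intro j _ hj
    simp [Pi.single_apply, Ne.symm hj]
  · intro h; exact absurd (Finset.mem_univ i) h

lemma refl_aux (i : I) (lam : P I) :
    (lam - D.coroot i lam • alphaRt i)
      - D.coroot i (lam - D.coroot i lam • alphaRt i) • alphaRt i = lam := by
  have h1 : D.coroot i (lam - D.coroot i lam • alphaRt i)
      = - D.coroot i lam := by
    have h0 := D.coroot_add i (lam - D.coroot i lam • alphaRt i)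
      (D.coroot i lam • alphaRt i)
    simp only [sub_add_cancel] at h0
    have h2 : D.coroot i (D.coroot i lam • alphaRt i) = 2 * D.coroot i lam := by
      rw [D.coroot_zsmul, D.coroot_alpha_self]; ring
    omega
  rw [h1, neg_zsmul]
  abel

/-- The simple reflection `s_i : λ ↦ λ - ⟨h_i,λ⟩ α_i`, as an automorphism of `P`. -/
def refl (i : I) : AddAut (P I) where
  toFun lam := lam - D.coroot i lam • alphaRt i
  invFun lam := lam - D.coroot i lam • alphaRt i
  left_inv lam := D.refl_aux i lam
  right_inv lam := D.refl_aux i lam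
  map_add' x y := by
    rw [D.coroot_add, add_zsmul]
    abel

/-- The affine Weyl group, as a subgroup of the automorphism group of `P`. -/
def weyl : Subgroup (AddAut (P I)) := Subgroup.closure (Set.range D.refl)

/-- The simple reflection `s_i` as an element of the Weyl group. -/
def sgen (i : I) : D.weyl := ⟨D.refl i, Subgroup.subset_closure ⟨i, rfl⟩⟩

/-- The length of an element of the Weyl group: the minimal length of an
expression as a product of simple reflections. -/
noncomputable def len (w : D.weyl) : ℕ :=
  sInf {n | ∃ l : List I, l.length = n ∧ (w : AddAut (P I)) = (l.map D.refl).prod}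

/-- The null root `δ = Σ a_i α_i`. -/
def delta : P I := (0, D.apos)

/-- The pairing `⟨c, λ⟩` with the canonical central element `c = Σ a_i^∨ h_i`. -/
def cpair (lam : P I) : ℤ := ∑ i, D.avee i * D.coroot i lam

/-- The dual Coxeter number `κ* = ⟨c, ρ⟩ = Σ a_i^∨`. -/
def kstar : ℤ := ∑ i, D.avee i

/-- λ ∈ P is regular if `⟨c,λ⟩ ≠ 0` and `⟨h_i, wλ⟩ ≠ 0` for all `w ∈ W`, `i ∈ I`. -/
def IsRegularWt (lam : P I) : Prop :=
  D.cpair lam ≠ 0 ∧ ∀ w ∈ D.weyl, ∀ i : I, D.coroot i (w lam) ≠ 0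

/-- The `W`-orbit of a weight. -/
def orb (lam : P I) : Set (P I) := {mu | ∃ w ∈ D.weyl, w lam = mu}

end AffineData

/-- The group algebra `ℤ[P]`. -/
abbrev ZP (I : Type) [Fintype I] [DecidableEq I] := AddMonoidAlgebra ℤ (P I)

/-- The basis element `e^λ` of `ℤ[P]`. -/
noncomputable def expw (lam : P I) : ZP I := AddMonoidAlgebra.single lam 1

/-- The action of an automorphism `w` of `P` on the group algebra `ℤ[P]`,
`e^λ ↦ e^{wλ}`, as a ring homomorphism. -/
noncomputable def wact (w : AddAut (P I)) : ZP I →+* ZP I :=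
  AddMonoidAlgebra.mapDomainRingHom ℤ w.toAddMonoidHom

lemma wact_single (w : AddAut (P I)) (lam : P I) (c : ℤ) :
    wact w (AddMonoidAlgebra.single lam c) = AddMonoidAlgebra.single (w lam) c := by
  simp [wact, AddMonoidAlgebra.mapDomainRingHom, Finsupp.mapDomain_single]


namespace AffineData

variable (D : AffineData I)

lemma coroot_delta (i : I) : D.coroot i D.delta = 0 := by
  simp only [coroot, delta, Pi.zero_apply, zero_add]
  exact D.row_zero i

lemma refl_apply (i : I) (lam : P I) :
    D.refl i lam = lam - D.coroot i lam • alphaRt i := rfl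

lemma refl_delta (i : I) : D.refl i D.delta = D.delta := by
  rw [refl_apply, D.coroot_delta, zero_zsmul, sub_zero]

lemma weyl_fix_delta {w : AddAut (P I)} (hw : w ∈ D.weyl) : w D.delta = D.delta := by
  induction hw using Subgroup.closure_induction with
  | mem x hx => obtain ⟨i, rfl⟩ := hx; exact D.refl_delta i
  | one => rfl
  | mul x y hx hy ihx ihy =>
      show x (y D.delta) = D.delta
      rw [ihy, ihx]
  | inv x hx ih =>
      have : x⁻¹ (x D.delta) = x⁻¹ D.delta := by rw [ih]
      rw [show x⁻¹ (x D.delta) = D.delta from x.symm_apply_apply _] at this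
      exact this.symm

lemma weyl_fix_zsmul_delta {w : AddAut (P I)} (hw : w ∈ D.weyl) (n : ℤ) :
    w (n • D.delta) = n • D.delta := by
  rw [map_zsmul, D.weyl_fix_delta hw]

/-- The multiplicative set generated by the elements `e^{nδ} - 1`, `n ≥ 1`; `R ⊗_{ℤ[q,q⁻¹]} ℤ[P]`
is realized as the localization of `ℤ[P]` at this set. -/
noncomputable def denomSet : Submonoid (ZP I) :=
  Submonoid.closure {x | ∃ n : ℤ, 0 < n ∧ x = expw (n • D.delta) - 1}

/-- `R ⊗_{ℤ[q,q⁻¹]} ℤ[P]`, realized as the localization of `ℤ[P]` at the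
multiplicative set generated by the `e^{nδ} - 1`, `n ≥ 1` (note that `q = e^δ` is
already invertible in this ring). -/
noncomputable abbrev locZP := Localization D.denomSet

lemma wact_denom {w : AddAut (P I)} (hw : w ∈ D.weyl) :
    D.denomSet ≤ Submonoid.comap (wact w) D.denomSet := by
  rw [denomSet, Submonoid.closure_le]
  intro x hx
  obtain ⟨n, hn, rfl⟩ := hx
  simp only [Submonoid.coe_comap, Set.mem_preimage, SetLike.mem_coe]
  have : wact w (expw (n • D.delta) - 1) = expw (n • D.delta) - 1 := by
    rw [map_sub, map_one, expw, wact_single, D.weyl_fix_zsmul_delta hw]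
  rw [this]
  exact Submonoid.subset_closure ⟨n, hn, rfl⟩

/-- The action of `w ∈ W` on `R ⊗_{ℤ[q,q⁻¹]} ℤ[P]`. -/
noncomputable def wactM (w : D.weyl) : D.locZP →+* D.locZP :=
  IsLocalization.map (Localization D.denomSet) (wact (w : AddAut (P I)))
    (D.wact_denom w.2)

end AffineData

/-- The projection `P = L ⊕ Q → Q`, as an additive homomorphism. -/
def projQ : P I →+ P I where
  toFun lam := (0, lam.2)
  map_zero' := rfl
  map_add' x y := by simp [Prod.ext_iff]

/-- The ring homomorphism `j_e : ℤ[P] → ℤ[Q] ⊆ ℤ[P]`, `e^{λ+α} ↦ e^α` for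
`λ ∈ L`, `α ∈ Q`. -/
noncomputable def jeRing : ZP I →+* ZP I :=
  AddMonoidAlgebra.mapDomainRingHom ℤ (projQ (I := I))

/-- The ℤ-linear map `j_w : ℤ[P] → ℤ[Q] ⊆ ℤ[P]`, `e^{λ+α} ↦ e^{w(λ+α)-λ}` for
`λ ∈ L`, `α ∈ Q`. -/
noncomputable def jmap (w : AddAut (P I)) (u : ZP I) : ZP I :=
  AddMonoidAlgebra.ofCoeff (Finsupp.mapDomain (fun mu => w mu - (mu.1, 0)) u.coeff)

namespace AffineData

variable (D : AffineData I)

lemma je_denom : D.denomSet ≤ Submonoid.comap (jeRing (I := I)) D.denomSet := by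
  rw [denomSet, Submonoid.closure_le]
  intro x hx
  obtain ⟨n, hn, rfl⟩ := hx
  simp only [Submonoid.coe_comap, Set.mem_preimage, SetLike.mem_coe]
  have h1 : jeRing (expw (n • D.delta) - 1) = expw (n • D.delta) - 1 := by
    rw [map_sub, map_one, expw, jeRing]
    have : AddMonoidAlgebra.mapDomainRingHom ℤ (projQ (I := I))
        (AddMonoidAlgebra.single (n • D.delta) 1)
        = AddMonoidAlgebra.single (projQ (n • D.delta)) (1 : ℤ) := by
      simp [AddMonoidAlgebra.mapDomainRingHom, Finsupp.mapDomain_single]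
    rw [this]
    have h2 : projQ (n • D.delta) = n • D.delta := by
      show ((0 : I → ℤ), (n • D.delta).2) = n • D.delta
      simp [delta, Prod.ext_iff]
    rw [h2]
  rw [h1]
  exact Submonoid.subset_closure ⟨n, hn, rfl⟩

/-- The `R`-linear extension of `j_e` to `R ⊗_{ℤ[q,q⁻¹]} ℤ[P]`, with values in
`R ⊗_{ℤ[q,q⁻¹]} ℤ[Q] ⊆ R ⊗_{ℤ[q,q⁻¹]} ℤ[P]`. -/
noncomputable def jeLoc : D.locZP →+* D.locZP :=
  IsLocalization.map (Localization D.denomSet) (jeRing (I := I)) D.je_denom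

end AffineData


namespace AffineData

variable (D : AffineData I)

/-- If every vertex of a set `S` has at least two neighbours inside `S`, then `S` is
closed under adjacency, contradicting connectivity when `S ≠ univ`. -/
lemma no_min_degree_two (S : Finset I) (hSne : S.Nonempty) (hSu : S ≠ Finset.univ)
    (hS : ∀ v ∈ S, 2 ≤ (S.filter (fun j => j ≠ v ∧ D.a v j ≠ 0)).card) : False := by
  classical
  -- boundary sum
  set Bd : ℤ := ∑ v ∈ S, ∑ j ∈ Finset.univ \ S, (-(D.a v j)) * D.apos j with hBd
  have hterm_nonneg : ∀ v ∈ S, ∀ j ∈ Finset.univ \ S, 0 ≤ (-(D.a v j)) * D.apos j := by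
    intro v hv j hj
    rw [Finset.mem_sdiff] at hj
    have hvj : v ≠ j := fun h => hj.2 (h ▸ hv)
    have := D.offdiag_nonpos v j hvj
    have := D.apos_pos j
    nlinarith
  have hBd_nonneg : 0 ≤ Bd := by
    apply Finset.sum_nonneg
    intro v hv
    exact Finset.sum_nonneg (hterm_nonneg v hv)
  -- row decomposition
  have hrow : ∀ v ∈ S, 2 * D.apos v =
      (∑ j ∈ S.erase v, (-(D.a v j)) * D.apos j)
      + ∑ j ∈ Finset.univ \ S, (-(D.a v j)) * D.apos j := by
    intro v hv
    have h0 := D.row_zero v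
    have hsplit : (Finset.univ : Finset I) = insert v ((S.erase v) ∪ (Finset.univ \ S)) := by
      ext j
      simp only [Finset.mem_univ, Finset.mem_insert, Finset.mem_union, Finset.mem_erase,
        Finset.mem_sdiff, true_iff]
      by_cases hjv : j = v
      · left; exact hjv
      · by_cases hjS : j ∈ S
        · right; left; exact ⟨hjv, hjS⟩
        · right; right; simpa using hjS
    have hdisj : Disjoint (S.erase v) (Finset.univ \ S) := by
      rw [Finset.disjoint_left]
      intro j hj hj'
      rw [Finset.mem_sdiff] at hj'
      exact hj'.2 (Finset.mem_of_mem_erase hj)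
    have hvnot : v ∉ (S.erase v) ∪ (Finset.univ \ S) := by
      simp only [Finset.mem_union, Finset.mem_erase, Finset.mem_sdiff, Finset.mem_univ,
        true_and]
      push_neg
      exact ⟨fun h => absurd rfl h, hv⟩
    rw [hsplit, Finset.sum_insert hvnot, Finset.sum_union hdisj, D.diag] at h0
    have : ∀ t : Finset I, ∑ j ∈ t, D.a v j * D.apos j = -∑ j ∈ t, (-(D.a v j)) * D.apos j := by
      intro t
      rw [← Finset.sum_neg_distrib]
      apply Finset.sum_congr rfl
      intro j _
      ring
    rw [this, this] at h0
    linarith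
  -- neighbour lower bound
  have hnb : ∀ v ∈ S, (∑ j ∈ S, (if j ≠ v ∧ D.a v j ≠ 0 then D.apos j else 0))
      ≤ ∑ j ∈ S.erase v, (-(D.a v j)) * D.apos j := by
    intro v hv
    have h1 : (∑ j ∈ S, (if j ≠ v ∧ D.a v j ≠ 0 then D.apos j else 0))
        = ∑ j ∈ S.erase v, (if D.a v j ≠ 0 then D.apos j else 0) := by
      rw [← Finset.sum_filter, ← Finset.sum_filter]
      congr 1
      ext j
      simp only [Finset.mem_filter, Finset.mem_erase]
      tauto
    rw [h1]
    apply Finset.sum_le_sum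
    intro j hj
    rw [Finset.mem_erase] at hj
    by_cases h : D.a v j = 0
    · simp [h]
    · simp only [h, if_pos, ne_eq, not_false_eq_true]
      have h2 : D.a v j ≤ -1 := by
        have := D.offdiag_nonpos v j (Ne.symm hj.1)
        omega
      have := D.apos_pos j
      nlinarith
  -- swap the double neighbour sum
  have hswap : (∑ v ∈ S, ∑ j ∈ S, (if j ≠ v ∧ D.a v j ≠ 0 then D.apos j else 0))
      = ∑ j ∈ S, (S.filter (fun v => v ≠ j ∧ D.a j v ≠ 0)).card * D.apos j := by
    rw [Finset.sum_comm]
    apply Finset.sum_congr rfl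
    intro j _
    have : ∀ v, (j ≠ v ∧ D.a v j ≠ 0) ↔ (v ≠ j ∧ D.a j v ≠ 0) := by
      intro v
      constructor
      · rintro ⟨h1, h2⟩
        exact ⟨Ne.symm h1, fun h => h2 ((D.zero_iff j v).mp h)⟩
      · rintro ⟨h1, h2⟩
        exact ⟨Ne.symm h1, fun h => h2 ((D.zero_iff j v).mpr h)⟩
    calc ∑ v ∈ S, (if j ≠ v ∧ D.a v j ≠ 0 then D.apos j else 0)
        = ∑ v ∈ S, (if v ≠ j ∧ D.a j v ≠ 0 then D.apos j else 0) := by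
          apply Finset.sum_congr rfl; intro v _; simp only [this v]
      _ = ∑ v ∈ S.filter (fun v => v ≠ j ∧ D.a j v ≠ 0), D.apos j := by
          rw [← Finset.sum_filter]
      _ = (S.filter (fun v => v ≠ j ∧ D.a j v ≠ 0)).card * D.apos j := by
          rw [Finset.sum_const, nsmul_eq_mul]
  -- combine
  have hlow : ∑ j ∈ S, 2 * D.apos j
      ≤ ∑ v ∈ S, ∑ j ∈ S, (if j ≠ v ∧ D.a v j ≠ 0 then D.apos j else 0) := by
    rw [hswap]
    apply Finset.sum_le_sum
    intro j hj
    have h2 := hS j hj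
    have := D.apos_pos j
    have : (2 : ℤ) ≤ ((S.filter (fun v => v ≠ j ∧ D.a j v ≠ 0)).card : ℤ) := by
      exact_mod_cast h2
    nlinarith [D.apos_pos j]
  have htot : ∑ v ∈ S, 2 * D.apos v
      = (∑ v ∈ S, ∑ j ∈ S.erase v, (-(D.a v j)) * D.apos j) + Bd := by
    rw [hBd, ← Finset.sum_add_distrib]
    apply Finset.sum_congr rfl
    intro v hv
    exact hrow v hv
  have hmid : ∑ v ∈ S, ∑ j ∈ S, (if j ≠ v ∧ D.a v j ≠ 0 then D.apos j else 0)
      ≤ ∑ v ∈ S, ∑ j ∈ S.erase v, (-(D.a v j)) * D.apos j := by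
    apply Finset.sum_le_sum
    intro v hv
    exact hnb v hv
  have hBd_zero : Bd = 0 := by linarith
  -- extract: all boundary entries vanish
  have hvanish : ∀ v ∈ S, ∀ j, j ∉ S → D.a v j = 0 := by
    intro v hv j hj
    have hj' : j ∈ Finset.univ \ S := Finset.mem_sdiff.mpr ⟨Finset.mem_univ j, hj⟩
    have hinner : ∀ w ∈ S, 0 ≤ ∑ j ∈ Finset.univ \ S, (-(D.a w j)) * D.apos j := by
      intro w hw
      exact Finset.sum_nonneg (hterm_nonneg w hw)
    have h1 : ∑ j ∈ Finset.univ \ S, (-(D.a v j)) * D.apos j = 0 := by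
      exact (Finset.sum_eq_zero_iff_of_nonneg hinner).mp (hBd ▸ hBd_zero) v hv
    have h2 : (-(D.a v j)) * D.apos j = 0 :=
      (Finset.sum_eq_zero_iff_of_nonneg (hterm_nonneg v hv)).mp h1 j hj'
    have := D.apos_pos j
    have : -(D.a v j) = 0 := by
      rcases mul_eq_zero.mp h2 with h | h
      · exact h
      · omega
    omega
  -- connectivity contradiction
  obtain ⟨j0, hj0⟩ : ∃ j, j ∉ S := by
    by_contra h
    push_neg at h
    exact hSu (Finset.eq_univ_iff_forall.mpr h)
  have hcne : (↑S : Set I)ᶜ.Nonempty := ⟨j0, by simpa using hj0⟩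
  obtain ⟨v0, hv0⟩ := hSne
  have hne : (↑S : Set I).Nonempty := ⟨v0, by simpa using hv0⟩
  obtain ⟨i, hi, j, hj, hij⟩ := D.connected ↑S hne hcne
  exact hij (hvanish i (by simpa using hi) j (by simpa using hj))

end AffineData
namespace AffineData

variable (D : AffineData I)

lemma exists_leaf (S : Finset I) (hSne : S.Nonempty) (hSu : S ≠ Finset.univ) :
    ∃ v ∈ S, (S.filter (fun j => j ≠ v ∧ D.a v j ≠ 0)).card ≤ 1 := by
  by_contra h
  push_neg at h
  exact D.no_min_degree_two S hSne hSu (fun v hv => h v hv)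

lemma symmetrizer_aux (n : ℕ) : ∀ S : Finset I, S.card = n → S ≠ Finset.univ →
    ∃ d : I → ℚ, (∀ i, 0 < d i) ∧
      ∀ j ∈ S, ∀ k ∈ S, d j * (D.a j k : ℚ) = d k * (D.a k j : ℚ) := by
  induction n using Nat.strong_induction_on with
  | _ n ih =>
    intro S hcard hSu
    rcases S.eq_empty_or_nonempty with rfl | hSne
    · exact ⟨fun _ => 1, fun _ => one_pos, by simp⟩
    obtain ⟨v, hv, hleaf⟩ := D.exists_leaf S hSne hSu
    have hcard' : (S.erase v).card < n := by
      rw [← hcard]; exact Finset.card_erase_lt_of_mem hv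
    have hS'u : S.erase v ≠ Finset.univ := by
      intro h
      have : v ∈ S.erase v := h ▸ Finset.mem_univ v
      exact (Finset.notMem_erase v S) this
    obtain ⟨d', hd'pos, hd'sym⟩ := ih (S.erase v).card hcard' (S.erase v) rfl hS'u
    -- the set of neighbours of v in S
    set T := S.filter (fun j => j ≠ v ∧ D.a v j ≠ 0) with hT
    have hTmem : ∀ k, k ∈ S → k ≠ v → D.a v k ≠ 0 → k ∈ T := by
      intro k hk hkv hak
      rw [hT, Finset.mem_filter]
      exact ⟨hk, hkv, hak⟩
    -- choose the scaling constant
    have hc : ∃ c : ℚ, 0 < c ∧ ∀ k ∈ S.erase v, c * (D.a v k : ℚ) = d' k * (D.a k v : ℚ) := by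
      rcases T.eq_empty_or_nonempty with hTe | ⟨u, hu⟩
      · refine ⟨1, one_pos, ?_⟩
        intro k hk
        rw [Finset.mem_erase] at hk
        have hvk : D.a v k = 0 := by
          by_contra hvk
          have : k ∈ T := hTmem k hk.2 hk.1 hvk
          rw [hTe] at this
          exact absurd this (Finset.notMem_empty k)
        have hkv : D.a k v = 0 := (D.zero_iff v k).mp hvk
        rw [hvk, hkv]
        push_cast
        ring
      · have huT := hu
        rw [hT, Finset.mem_filter] at huT
        obtain ⟨huS, huv, hauv⟩ := huT
        have havu : D.a u v ≠ 0 := fun h => hauv ((D.zero_iff v u).mpr h)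
        have hvu_neg : D.a v u ≤ -1 := by
          have := D.offdiag_nonpos v u (Ne.symm huv)
          omega
        have huv_neg : D.a u v ≤ -1 := by
          have := D.offdiag_nonpos u v huv
          omega
        refine ⟨d' u * (D.a u v : ℚ) / (D.a v u : ℚ), ?_, ?_⟩
        · have h1 : (D.a u v : ℚ) < 0 := by exact_mod_cast (by omega : D.a u v < 0)
          have h2 : (D.a v u : ℚ) < 0 := by exact_mod_cast (by omega : D.a v u < 0)
          have := hd'pos u
          have hnum : d' u * (D.a u v : ℚ) < 0 := mul_neg_of_pos_of_neg this h1
          exact div_pos_of_neg_of_neg hnum h2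
        · intro k hk
          by_cases hak : D.a v k = 0
          · have hka : D.a k v = 0 := (D.zero_iff v k).mp hak
            rw [hak, hka]
            push_cast
            ring
          · rw [Finset.mem_erase] at hk
            have hkT : k ∈ T := hTmem k hk.2 hk.1 hak
            have hku : k = u := by
              have := Finset.card_le_one.mp hleaf k (hT ▸ hkT) u (hT ▸ hu)
              exact this
            subst hku
            have h2 : (D.a v k : ℚ) ≠ 0 := fun h => hak (by exact_mod_cast h)
            field_simp
    obtain ⟨c, hcpos, hckey⟩ := hc
    refine ⟨Function.update d' v c, ?_, ?_⟩
    · intro i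
      by_cases hiv : i = v
      · subst hiv; simp [Function.update_self, hcpos]
      · simp [Function.update_of_ne hiv, hd'pos i]
    · intro j hj k hk
      by_cases hjv : j = v <;> by_cases hkv : k = v
      · rw [hjv, hkv]
      · have hk' : k ∈ S.erase v := Finset.mem_erase.mpr ⟨hkv, hk⟩
        rw [hjv, Function.update_self, Function.update_of_ne hkv]
        exact hckey k hk'
      · have hj' : j ∈ S.erase v := Finset.mem_erase.mpr ⟨hjv, hj⟩
        rw [hkv, Function.update_self, Function.update_of_ne hjv]
        exact (hckey j hj').symm
      · rw [Function.update_of_ne hjv, Function.update_of_ne hkv]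
        exact hd'sym j (Finset.mem_erase.mpr ⟨hjv, hj⟩) k (Finset.mem_erase.mpr ⟨hkv, hk⟩)

lemma symmetrizer (S : Finset I) (hSu : S ≠ Finset.univ) :
    ∃ d : I → ℚ, (∀ i, 0 < d i) ∧
      ∀ j ∈ S, ∀ k ∈ S, d j * (D.a j k : ℚ) = d k * (D.a k j : ℚ) :=
  D.symmetrizer_aux S.card S rfl hSu

end AffineData
/-- The rational weight space. -/
abbrev PQ (I : Type) := (I → ℚ) × (I → ℚ)

/-- Coordinatewise cast `P → PQ`. -/
def iota (x : P I) : PQ I := (fun i => (x.1 i : ℚ), fun i => (x.2 i : ℚ))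

namespace AffineData

variable (D : AffineData I)

/-- Coefficients of the invariant form on the root part. -/
def bq (T : Finset I) (d : I → ℚ) (j k : I) : ℚ :=
  if j ∈ T then d j * (D.a j k : ℚ) else if k ∈ T then d k * (D.a k j : ℚ) else 0

/-- Coefficients of the invariant form pairing weight and root parts. -/
def eT (T : Finset I) (d : I → ℚ) (k : I) : ℚ := if k ∈ T then d k else 0

/-- A symmetric bilinear form on `PQ`, invariant under the reflections `s_j`, `j ∈ T`. -/
def BQ (T : Finset I) (d : I → ℚ) (x y : PQ I) : ℚ :=
  (∑ k, eT T d k * (x.1 k * y.2 k + y.1 k * x.2 k))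
    + ∑ j, ∑ k, bq D T d j k * (x.2 j * y.2 k)

variable {T : Finset I} {d : I → ℚ}

lemma bq_symm (hsym : ∀ j ∈ T, ∀ k ∈ T, d j * (D.a j k : ℚ) = d k * (D.a k j : ℚ))
    (j k : I) : D.bq T d j k = D.bq T d k j := by
  unfold bq
  by_cases hj : j ∈ T <;> by_cases hk : k ∈ T <;> simp [hj, hk]
  exact hsym j hj k hk

lemma BQ_symm (hsym : ∀ j ∈ T, ∀ k ∈ T, d j * (D.a j k : ℚ) = d k * (D.a k j : ℚ))
    (x y : PQ I) : D.BQ T d x y = D.BQ T d y x := by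
  unfold BQ
  congr 1
  · apply Finset.sum_congr rfl
    intro k _
    ring
  · rw [Finset.sum_comm]
    apply Finset.sum_congr rfl
    intro j _
    apply Finset.sum_congr rfl
    intro k _
    rw [D.bq_symm hsym j k]
    ring

lemma BQ_add_left (x x' y : PQ I) :
    D.BQ T d (x + x') y = D.BQ T d x y + D.BQ T d x' y := by
  unfold BQ
  simp only [Prod.fst_add, Prod.snd_add, Pi.add_apply, mul_add, add_mul,
    Finset.sum_add_distrib]
  ring

lemma BQ_smul_left (c : ℚ) (x y : PQ I) :
    D.BQ T d (c • x) y = c * D.BQ T d x y := by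
  unfold BQ
  simp only [Prod.smul_fst, Prod.smul_snd, Pi.smul_apply, smul_eq_mul, mul_add,
    Finset.mul_sum]
  congr 1
  · apply Finset.sum_congr rfl; intro k _; ring
  · apply Finset.sum_congr rfl; intro j _
    apply Finset.sum_congr rfl
    intro k _
    ring

lemma BQ_sub_left (x x' y : PQ I) :
    D.BQ T d (x - x') y = D.BQ T d x y - D.BQ T d x' y := by
  have h := D.BQ_add_left (T := T) (d := d) (x - x') x' y
  rw [sub_add_cancel] at h
  linarith

lemma BQ_add_right (hsym : ∀ j ∈ T, ∀ k ∈ T, d j * (D.a j k : ℚ) = d k * (D.a k j : ℚ))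
    (x y y' : PQ I) : D.BQ T d x (y + y') = D.BQ T d x y + D.BQ T d x y' := by
  rw [D.BQ_symm hsym, D.BQ_add_left, D.BQ_symm hsym y x, D.BQ_symm hsym y' x]

lemma BQ_smul_right (hsym : ∀ j ∈ T, ∀ k ∈ T, d j * (D.a j k : ℚ) = d k * (D.a k j : ℚ))
    (c : ℚ) (x y : PQ I) : D.BQ T d x (c • y) = c * D.BQ T d x y := by
  rw [D.BQ_symm hsym, D.BQ_smul_left, D.BQ_symm hsym y x]

lemma BQ_sub_right (hsym : ∀ j ∈ T, ∀ k ∈ T, d j * (D.a j k : ℚ) = d k * (D.a k j : ℚ))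
    (x y y' : PQ I) : D.BQ T d x (y - y') = D.BQ T d x y - D.BQ T d x y' := by
  rw [D.BQ_symm hsym, D.BQ_sub_left, D.BQ_symm hsym y x, D.BQ_symm hsym y' x]

/-- The rational coroot pairing. -/
def corootQ (i : I) (x : PQ I) : ℚ := x.1 i + ∑ k, (D.a i k : ℚ) * x.2 k

/-- The rational simple root. -/
def alphaQ (j : I) : PQ I := (0, Pi.single j 1)

lemma BQ_alpha_left (hsym : ∀ j ∈ T, ∀ k ∈ T, d j * (D.a j k : ℚ) = d k * (D.a k j : ℚ))
    {j : I} (hj : j ∈ T) (y : PQ I) :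
    D.BQ T d (alphaQ j) y = d j * D.corootQ j y := by
  unfold BQ alphaQ corootQ
  simp only [Pi.zero_apply, zero_mul, mul_zero, add_zero, zero_add, Pi.single_apply,
    mul_ite, ite_mul, one_mul, Finset.sum_ite_eq', Finset.mem_univ, if_true]
  simp only [eT, hj, if_true]
  have h2 : (∑ j' : I, ∑ k : I, if j' = j then D.bq T d j' k * y.2 k else 0)
      = ∑ k, d j * ((D.a j k : ℚ) * y.2 k) := by
    rw [Finset.sum_comm]
    apply Finset.sum_congr rfl
    intro k _
    rw [Finset.sum_ite_eq' Finset.univ j (fun j' => D.bq T d j' k * y.2 k)]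
    simp only [Finset.mem_univ, if_true, bq, hj]
    ring
  rw [h2, mul_add, Finset.mul_sum]
  ring_nf

lemma BQ_alpha_right (hsym : ∀ j ∈ T, ∀ k ∈ T, d j * (D.a j k : ℚ) = d k * (D.a k j : ℚ))
    {j : I} (hj : j ∈ T) (x : PQ I) :
    D.BQ T d x (alphaQ j) = d j * D.corootQ j x := by
  rw [D.BQ_symm hsym]
  exact D.BQ_alpha_left hsym hj x

lemma corootQ_alpha_self (j : I) : D.corootQ j (alphaQ j) = 2 := by
  unfold corootQ alphaQ
  simp only [Pi.zero_apply, zero_add]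
  rw [Finset.sum_eq_single j]
  · simp [D.diag]
  · intro k _ hk
    simp [Pi.single_apply, hk]
  · intro h; exact absurd (Finset.mem_univ j) h

lemma iota_refl (j : I) (x : P I) :
    iota (D.refl j x) = iota x - ((D.coroot j x : ℚ)) • alphaQ j := by
  have h1 : D.refl j x = x - D.coroot j x • alphaRt j := rfl
  rw [h1]
  unfold iota alphaQ alphaRt
  ext i
  · simp
  · simp only [Prod.snd_sub, Pi.sub_apply, Prod.smul_snd, Pi.smul_apply, smul_eq_mul,
      Prod.mk.injEq, Pi.single_apply]
    push_cast
    by_cases h : i = j <;> simp [h]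

lemma corootQ_iota (j : I) (x : P I) : D.corootQ j (iota x) = (D.coroot j x : ℚ) := by
  unfold corootQ iota coroot
  push_cast
  rfl

lemma BQ_refl_invariant (hsym : ∀ j ∈ T, ∀ k ∈ T, d j * (D.a j k : ℚ) = d k * (D.a k j : ℚ))
    {j : I} (hj : j ∈ T) (x y : P I) :
    D.BQ T d (iota (D.refl j x)) (iota (D.refl j y)) = D.BQ T d (iota x) (iota y) := by
  rw [D.iota_refl, D.iota_refl]
  rw [D.BQ_sub_left, D.BQ_sub_right hsym, D.BQ_sub_right hsym,
    D.BQ_smul_left, D.BQ_smul_right hsym, D.BQ_smul_left,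
    D.BQ_smul_right hsym,
    D.BQ_alpha_left hsym hj, D.BQ_alpha_right hsym hj,
    D.BQ_alpha_left hsym hj, D.corootQ_iota, D.corootQ_iota, D.corootQ_alpha_self]
  ring

end AffineData
namespace AffineData

variable (D : AffineData I) {T : Finset I} {d : I → ℚ}

lemma BQ_root_part (c c' : I → ℚ) :
    D.BQ T d ((0 : I → ℚ), c) ((0 : I → ℚ), c') = ∑ j, ∑ k, D.bq T d j k * (c j * c' k) := by
  unfold BQ
  simp

lemma BQ_posdef (hTu : T ≠ Finset.univ) (hd : ∀ i, 0 < d i)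
    (hsym : ∀ j ∈ T, ∀ k ∈ T, d j * (D.a j k : ℚ) = d k * (D.a k j : ℚ))
    (c : I → ℚ) (hsupp : ∀ k, k ∉ T → c k = 0) :
    0 ≤ D.BQ T d ((0 : I → ℚ), c) ((0 : I → ℚ), c) ∧
      (D.BQ T d ((0 : I → ℚ), c) ((0 : I → ℚ), c) = 0 → c = 0) := by
  classical
  set u : I → ℚ := fun k => (D.apos k : ℚ) with hu_def
  have hu : ∀ k, 0 < u k := fun k => by
    have := D.apos_pos k
    simp only [hu_def]
    exact_mod_cast this
  set σ : I → ℚ := fun j => ∑ k ∈ Finset.univ \ T, (d j * (-(D.a j k) : ℚ)) * u k with hσ_def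
  have hσ_term_nonneg : ∀ j ∈ T, ∀ k ∈ Finset.univ \ T, 0 ≤ (d j * (-(D.a j k) : ℚ)) * u k := by
    intro j hj k hk
    rw [Finset.mem_sdiff] at hk
    have hjk : j ≠ k := fun h => hk.2 (h ▸ hj)
    have h1 : D.a j k ≤ 0 := D.offdiag_nonpos j k hjk
    have h2 : (0:ℚ) ≤ (-(D.a j k) : ℚ) := by
      have : (0:ℤ) ≤ -(D.a j k) := by omega
      exact_mod_cast this
    have := (hd j).le
    have := (hu k).le
    positivity
  have hσ_nonneg : ∀ j ∈ T, 0 ≤ σ j := fun j hj =>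
    Finset.sum_nonneg (hσ_term_nonneg j hj)
  have hσ_row : ∀ j ∈ T, ∑ k ∈ T, D.bq T d j k * u k = σ j := by
    intro j hj
    have hrz : ∑ k, (D.a j k : ℚ) * u k = 0 := by
      have := D.row_zero j
      have : ((∑ k, D.a j k * D.apos k : ℤ) : ℚ) = 0 := by exact_mod_cast this
      push_cast at this
      exact this
    have hsplit : (∑ k ∈ T, (D.a j k : ℚ) * u k) + ∑ k ∈ Finset.univ \ T, (D.a j k : ℚ) * u k
        = 0 := by
      rw [← Finset.sum_union (Finset.disjoint_sdiff)]
      rw [Finset.union_sdiff_of_subset (Finset.subset_univ T)]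
      exact hrz
    have h1 : ∑ k ∈ T, D.bq T d j k * u k = d j * ∑ k ∈ T, (D.a j k : ℚ) * u k := by
      rw [Finset.mul_sum]
      apply Finset.sum_congr rfl
      intro k _
      simp only [bq, hj, if_true]
      ring
    rw [h1]
    have h2 : σ j = ∑ k ∈ Finset.univ \ T, (d j * (-(D.a j k) : ℚ)) * u k := by
      simp only [hσ_def]
    rw [h2]
    have h3 : ∑ k ∈ Finset.univ \ T, (d j * (-(D.a j k) : ℚ)) * u k
        = -(d j * ∑ k ∈ Finset.univ \ T, (D.a j k : ℚ) * u k) := by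
      rw [Finset.mul_sum, ← Finset.sum_neg_distrib]
      apply Finset.sum_congr rfl
      intro k _
      push_cast
      ring
    rw [h3]
    linear_combination (d j) * hsplit
  -- restrict the quadratic form to T
  set Q : ℚ := ∑ j ∈ T, ∑ k ∈ T, D.bq T d j k * (c j * c k) with hQ_def
  have hQ : D.BQ T d ((0 : I → ℚ), c) ((0 : I → ℚ), c) = Q := by
    have houter : Q = ∑ j, ∑ k ∈ T, D.bq T d j k * (c j * c k) := by
      rw [hQ_def]
      apply Finset.sum_subset (Finset.subset_univ T)
      intro j _ hj
      apply Finset.sum_eq_zero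
      intro k _
      rw [hsupp j hj]
      ring
    have hinner : ∀ j : I, ∑ k ∈ T, D.bq T d j k * (c j * c k)
        = ∑ k, D.bq T d j k * (c j * c k) := by
      intro j
      apply Finset.sum_subset (Finset.subset_univ T)
      intro k _ hk
      rw [hsupp k hk]
      ring
    rw [D.BQ_root_part, houter]
    exact (Finset.sum_congr rfl fun j _ => (hinner j)).symm
  set R : ℚ := ∑ j ∈ T, ∑ k ∈ T,
      (-(D.bq T d j k)) * (u j * u k * (c j / u j - c k / u k)^2) with hR_def
  have hR_term_nonneg : ∀ j ∈ T, ∀ k ∈ T,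
      0 ≤ (-(D.bq T d j k)) * (u j * u k * (c j / u j - c k / u k)^2) := by
    intro j hj k hk
    by_cases hjk : j = k
    · subst hjk
      simp
    · have h1 : D.bq T d j k ≤ 0 := by
        simp only [bq, hj, if_true]
        have h2 : D.a j k ≤ 0 := D.offdiag_nonpos j k hjk
        have h3 : (D.a j k : ℚ) ≤ 0 := by exact_mod_cast h2
        have := (hd j).le
        exact mul_nonpos_of_nonneg_of_nonpos this h3
      have h4 : (0:ℚ) ≤ -(D.bq T d j k) := by linarith
      have := (hu j).le
      have := (hu k).le
      positivity
  have hR_nonneg : 0 ≤ R :=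
    Finset.sum_nonneg fun j hj => Finset.sum_nonneg (hR_term_nonneg j hj)
  -- the key identity
  have hident : Q = (∑ j ∈ T, σ j * (c j)^2 / u j) + R / 2 := by
    have hpoint : ∀ j ∈ T, ∀ k ∈ T,
        (-(D.bq T d j k)) * (u j * u k * (c j / u j - c k / u k)^2)
          = (-(D.bq T d j k * u k)) * ((c j)^2 / u j)
            + (-(D.bq T d j k * u j)) * ((c k)^2 / u k)
            + 2 * (D.bq T d j k * (c j * c k)) := by
      intro j _ k _
      have h1 : u j ≠ 0 := (hu j).ne'
      have h2 : u k ≠ 0 := (hu k).ne'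
      field_simp
      ring
    have hR2 : R = (∑ j ∈ T, (-(σ j)) * ((c j)^2 / u j))
        + (∑ k ∈ T, (-(σ k)) * ((c k)^2 / u k)) + 2 * Q := by
      rw [hR_def]
      have : ∀ j ∈ T, ∑ k ∈ T, (-(D.bq T d j k)) * (u j * u k * (c j / u j - c k / u k)^2)
          = ∑ k ∈ T, ((-(D.bq T d j k * u k)) * ((c j)^2 / u j)
            + (-(D.bq T d j k * u j)) * ((c k)^2 / u k)
            + 2 * (D.bq T d j k * (c j * c k))) :=
        fun j hj => Finset.sum_congr rfl fun k hk => hpoint j hj k hk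
      rw [Finset.sum_congr rfl this]
      simp only [Finset.sum_add_distrib]
      have hA1 : ∑ j ∈ T, ∑ k ∈ T, (-(D.bq T d j k * u k)) * ((c j)^2 / u j)
          = ∑ j ∈ T, (-(σ j)) * ((c j)^2 / u j) := by
        apply Finset.sum_congr rfl
        intro j hj
        rw [← hσ_row j hj, ← Finset.sum_neg_distrib, Finset.sum_mul]
      have hA2 : ∑ j ∈ T, ∑ k ∈ T, (-(D.bq T d j k * u j)) * ((c k)^2 / u k)
          = ∑ k ∈ T, (-(σ k)) * ((c k)^2 / u k) := by
        rw [Finset.sum_comm]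
        apply Finset.sum_congr rfl
        intro k hk
        have : ∀ j ∈ T, -(D.bq T d j k * u j) = -(D.bq T d k j * u j) := by
          intro j hj
          rw [D.bq_symm hsym j k]
        rw [Finset.sum_congr rfl fun j hj => by rw [this j hj]]
        rw [← hσ_row k hk, ← Finset.sum_neg_distrib, Finset.sum_mul]
      have hA3 : ∑ j ∈ T, ∑ k ∈ T, 2 * (D.bq T d j k * (c j * c k)) = 2 * Q := by
        rw [hQ_def, Finset.mul_sum]
        apply Finset.sum_congr rfl
        intro j _
        rw [Finset.mul_sum]
      rw [hA1, hA2, hA3]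
    have hdiag : ∑ j ∈ T, (-(σ j)) * ((c j)^2 / u j) = -∑ j ∈ T, σ j * ((c j)^2) / u j := by
      rw [← Finset.sum_neg_distrib]
      apply Finset.sum_congr rfl
      intro j _
      ring
    rw [hdiag] at hR2
    linarith
  have hdiag_nonneg : ∀ j ∈ T, 0 ≤ σ j * (c j)^2 / u j := by
    intro j hj
    have := hσ_nonneg j hj
    have := (hu j).le
    positivity
  have hQ_nonneg : 0 ≤ Q := by
    rw [hident]
    have h1 : 0 ≤ ∑ j ∈ T, σ j * (c j)^2 / u j := Finset.sum_nonneg hdiag_nonneg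
    linarith
  constructor
  · rw [hQ]; exact hQ_nonneg
  · rw [hQ]
    intro hQ0
    by_contra hc
    have hZne : ({i | c i ≠ 0} : Set I).Nonempty := by
      by_contra h
      rw [Set.not_nonempty_iff_eq_empty] at h
      apply hc
      funext i
      have : i ∉ ({i | c i ≠ 0} : Set I) := h ▸ Set.notMem_empty i
      simpa using this
    have hZsub : ∀ i ∈ ({i | c i ≠ 0} : Set I), i ∈ T := by
      intro i hi
      by_contra h
      exact hi (hsupp i h)
    have hZcne : ({i | c i ≠ 0} : Set I)ᶜ.Nonempty := by
      obtain ⟨j0, hj0⟩ : ∃ j0, j0 ∉ T := by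
        by_contra h
        push_neg at h
        exact hTu (Finset.eq_univ_iff_forall.mpr h)
      exact ⟨j0, fun h => hj0 (hZsub j0 h)⟩
    obtain ⟨i, hi, j, hj, hij⟩ := D.connected _ hZne hZcne
    have hiT : i ∈ T := hZsub i hi
    have hci : c i ≠ 0 := hi
    have hcj : c j = 0 := by
      simp only [Set.mem_compl_iff, Set.mem_setOf_eq, not_not] at hj
      exact hj
    -- from Q = 0, both nonneg parts vanish
    have hsum1 : ∑ j' ∈ T, σ j' * (c j')^2 / u j' = 0 := by
      have h1 : 0 ≤ ∑ j' ∈ T, σ j' * (c j')^2 / u j' := Finset.sum_nonneg hdiag_nonneg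
      linarith [hident, hR_nonneg, hQ0]
    have hRzero : R = 0 := by
      have h1 : 0 ≤ ∑ j' ∈ T, σ j' * (c j')^2 / u j' := Finset.sum_nonneg hdiag_nonneg
      linarith [hident, hQ0]
    by_cases hjT : j ∈ T
    · -- the square term (i, j) vanishes, forcing c i / u i = c j / u j = 0
      have hterm : (-(D.bq T d i j)) * (u i * u j * (c i / u i - c j / u j)^2) = 0 := by
        have h1 := (Finset.sum_eq_zero_iff_of_nonneg
          (fun j' hj' => Finset.sum_nonneg (hR_term_nonneg j' hj'))).mp hRzero i hiT
        exact (Finset.sum_eq_zero_iff_of_nonneg (hR_term_nonneg i hiT)).mp h1 j hjT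
      have hbq : D.bq T d i j ≠ 0 := by
        simp only [bq, hiT, if_true]
        have h1 : (D.a i j : ℚ) ≠ 0 := fun h => hij (by exact_mod_cast h)
        exact mul_ne_zero (hd i).ne' h1
      have h2 : u i * u j * (c i / u i - c j / u j)^2 = 0 := by
        rcases mul_eq_zero.mp hterm with h | h
        · exact absurd (neg_eq_zero.mp h) hbq
        · exact h
      have h3 : c i / u i - c j / u j = 0 := by
        have hui := (hu i).ne'
        have huj := (hu j).ne'
        rcases mul_eq_zero.mp h2 with h | h
        · rcases mul_eq_zero.mp h with h' | h'
          · exact absurd h' hui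
          · exact absurd h' huj
        · exact pow_eq_zero_iff (by norm_num) |>.mp h
      rw [hcj, zero_div, sub_zero] at h3
      have : c i = 0 := by
        rcases div_eq_zero_iff.mp h3 with h | h
        · exact h
        · exact absurd h (hu i).ne'
      exact hci this
    · -- σ i must vanish, but it has the positive boundary term at j
      have hσi : σ i = 0 := by
        have h1 := (Finset.sum_eq_zero_iff_of_nonneg hdiag_nonneg).mp hsum1 i hiT
        have hci2 : (c i)^2 ≠ 0 := pow_ne_zero 2 hci
        rcases div_eq_zero_iff.mp h1 with h | h
        · rcases mul_eq_zero.mp h with h' | h'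
          · exact h'
          · exact absurd h' hci2
        · exact absurd h (hu i).ne'
      have hjmem : j ∈ Finset.univ \ T := Finset.mem_sdiff.mpr ⟨Finset.mem_univ j, hjT⟩
      have hterm := (Finset.sum_eq_zero_iff_of_nonneg (hσ_term_nonneg i hiT)).mp hσi j hjmem
      have h1 : (-(D.a i j) : ℚ) ≠ 0 := by
        have : (D.a i j : ℚ) ≠ 0 := fun h => hij (by exact_mod_cast h)
        simpa using this
      have h2 : d i * (-(D.a i j) : ℚ) * u j ≠ 0 :=
        mul_ne_zero (mul_ne_zero (hd i).ne' h1) (hu j).ne'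
      exact h2 hterm

end AffineData
namespace AffineData

variable (D : AffineData I) {T : Finset I} {d : I → ℚ}

lemma exists_dual (hTu : T ≠ Finset.univ) (hd : ∀ i, 0 < d i)
    (hsym : ∀ j ∈ T, ∀ k ∈ T, d j * (D.a j k : ℚ) = d k * (D.a k j : ℚ)) :
    ∀ j ∈ T, ∃ g : I → ℚ, (∀ k, k ∉ T → g k = 0) ∧
      ∀ c : I → ℚ, (∀ k, k ∉ T → c k = 0) →
        D.BQ T d ((0:I→ℚ), g) ((0:I→ℚ), c) = c j := by
  classical
  let W : Submodule ℚ (I → ℚ) :=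
    { carrier := {c | ∀ k, k ∉ T → c k = 0}
      add_mem' := fun {x y} hx hy k hk => by
        simp only [Pi.add_apply, hx k hk, hy k hk, add_zero]
      zero_mem' := fun k _ => rfl
      smul_mem' := fun r {x} hx k hk => by
        simp only [Pi.smul_apply, hx k hk, smul_eq_mul, mul_zero] }
  have hWmem : ∀ c : I → ℚ, c ∈ W ↔ ∀ k, k ∉ T → c k = 0 := fun c => Iff.rfl
  let Φ : W →ₗ[ℚ] W :=
    { toFun := fun c => ⟨fun k => if k ∈ T then ∑ j, D.bq T d j k * (c : I → ℚ) j else 0,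
        fun k hk => if_neg hk⟩
      map_add' := by
        intro x y
        apply Subtype.ext
        funext k
        by_cases hk : k ∈ T
        · simp only [hk, if_true, Submodule.coe_add, Pi.add_apply, mul_add,
            Finset.sum_add_distrib]
        · simp [hk]
      map_smul' := by
        intro r x
        apply Subtype.ext
        funext k
        by_cases hk : k ∈ T
        · simp only [hk, if_true, SetLike.val_smul, Pi.smul_apply, smul_eq_mul,
            RingHom.id_apply, Finset.mul_sum]
          apply Finset.sum_congr rfl
          intro j _
          ring
        · simp [hk] }
  have hpair : ∀ x y : W, D.BQ T d ((0:I→ℚ), (x:I→ℚ)) ((0:I→ℚ), (y:I→ℚ))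
      = ∑ k, ((Φ x : W) : I → ℚ) k * (y : I → ℚ) k := by
    intro x y
    rw [D.BQ_root_part, Finset.sum_comm]
    apply Finset.sum_congr rfl
    intro k _
    by_cases hk : k ∈ T
    · simp only [Φ, LinearMap.coe_mk, AddHom.coe_mk, hk, if_true, Finset.sum_mul]
      apply Finset.sum_congr rfl
      intro j _
      ring
    · have hy := y.2 k hk
      rw [hy]
      simp only [Φ, LinearMap.coe_mk, AddHom.coe_mk, hk, if_false, mul_zero, zero_mul]
      exact Finset.sum_eq_zero fun j _ => by simp
  have hΦinj : Function.Injective Φ := by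
    intro x y hxy
    have hz : Φ (x - y) = 0 := by rw [map_sub, hxy, sub_self]
    have hq : D.BQ T d ((0:I→ℚ), ((x - y : W) : I → ℚ)) ((0:I→ℚ), ((x - y : W) : I → ℚ))
        = 0 := by
      rw [hpair (x-y) (x-y), hz]
      exact Finset.sum_eq_zero fun k _ => by
        simp
    have h0 := (D.BQ_posdef hTu hd hsym ((x - y : W) : I → ℚ) (x - y).2).2 hq
    have : x - y = 0 := Subtype.ext h0
    exact sub_eq_zero.mp this
  have hΦsurj : Function.Surjective Φ := (LinearMap.injective_iff_surjective).mp hΦinj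
  intro j hj
  have hδ : (fun k => if k = j then (1:ℚ) else 0) ∈ W := by
    intro k hk
    have : k ≠ j := fun h => hk (h ▸ hj)
    simp [this]
  obtain ⟨g, hg⟩ := hΦsurj ⟨_, hδ⟩
  refine ⟨(g : I → ℚ), g.2, ?_⟩
  intro c hc
  have := hpair g ⟨c, hc⟩
  rw [this, hg]
  simp only []
  rw [Finset.sum_eq_single j]
  · simp
  · intro k _ hk
    simp [hk]
  · intro h; exact absurd (Finset.mem_univ j) h

lemma BQ_zero_left (y : PQ I) : D.BQ T d 0 y = 0 := by
  have := D.BQ_smul_left (T := T) (d := d) 0 0 y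
  rw [zero_smul, zero_mul] at this
  exact this

lemma BQ_cs (hTu : T ≠ Finset.univ) (hd : ∀ i, 0 < d i)
    (hsym : ∀ j ∈ T, ∀ k ∈ T, d j * (D.a j k : ℚ) = d k * (D.a k j : ℚ))
    (g c : I → ℚ) (hg : ∀ k, k ∉ T → g k = 0) (hc : ∀ k, k ∉ T → c k = 0) :
    (D.BQ T d ((0:I→ℚ), g) ((0:I→ℚ), c))^2
      ≤ D.BQ T d ((0:I→ℚ), g) ((0:I→ℚ), g) * D.BQ T d ((0:I→ℚ), c) ((0:I→ℚ), c) := by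
  set x : PQ I := ((0:I→ℚ), g) with hx
  set y : PQ I := ((0:I→ℚ), c) with hy
  set A := D.BQ T d x x with hA
  set B := D.BQ T d x y with hB
  set C := D.BQ T d y y with hC
  have hexp : ∀ t : ℚ, 0 ≤ t^2 * A + 2 * t * B + C := by
    intro t
    have hsupp : ∀ k, k ∉ T → (t • g + c) k = 0 := by
      intro k hk
      simp [hg k hk, hc k hk]
    have h0 := (D.BQ_posdef hTu hd hsym (t • g + c) hsupp).1
    have heq : ((0:I→ℚ), t • g + c) = t • x + y := by
      rw [hx, hy]
      ext i
      · simp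
      · simp
    rw [heq] at h0
    have hexp2 : D.BQ T d (t • x + y) (t • x + y) = t^2 * A + 2 * t * B + C := by
      rw [D.BQ_add_left, D.BQ_smul_left, D.BQ_add_right hsym, D.BQ_add_right hsym,
        D.BQ_smul_right hsym, D.BQ_smul_right hsym, ← hA, ← hB, ← hC]
      have hBsymm : D.BQ T d y x = B := by rw [hB, D.BQ_symm hsym]
      rw [hBsymm]
      ring
    rw [hexp2] at h0
    exact h0
  have hA_nonneg : 0 ≤ A := (D.BQ_posdef hTu hd hsym g hg).1
  by_cases hA0 : A = 0
  · have hg0 : g = 0 := (D.BQ_posdef hTu hd hsym g hg).2 (by rw [← hA, hA0])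
    have hx0 : x = 0 := by
      rw [hx, hg0]
      rfl
    have hB0 : B = 0 := by rw [hB, hx0, D.BQ_zero_left]
    rw [hB0, hA0]
    simp
  · have hApos : 0 < A := lt_of_le_of_ne hA_nonneg (Ne.symm hA0)
    have h1 := hexp (-B / A)
    have h2 : (-B / A)^2 * A + 2 * (-B / A) * B + C = C - B^2 / A := by
      field_simp
      ring
    rw [h2] at h1
    have h3 : B^2 / A ≤ C := by linarith
    have h4 : B^2 ≤ C * A := (div_le_iff₀ hApos).mp h3
    nlinarith

end AffineData
namespace AffineData

variable (D : AffineData I) {T : Finset I} {d : I → ℚ}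

lemma iota_add (x y : P I) : iota (x + y) = iota x + iota y := by
  unfold iota
  ext i <;> simp

lemma BQ_right_coords (x : PQ I) (cb : I → ℚ) :
    D.BQ T d x ((0:I→ℚ), cb)
      = ∑ k, (eT T d k * x.1 k + ∑ j, D.bq T d j k * x.2 j) * cb k := by
  unfold BQ
  simp only [Pi.zero_apply, mul_zero, zero_mul, add_zero]
  rw [Finset.sum_comm, ← Finset.sum_add_distrib]
  apply Finset.sum_congr rfl
  intro k _
  rw [add_mul, Finset.sum_mul]
  congr 1
  · ring
  · apply Finset.sum_congr rfl
    intro j _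
    ring

lemma BQ_closure_invariant (J : Set I) (hJT : ∀ j ∈ J, j ∈ T)
    (hsym : ∀ j ∈ T, ∀ k ∈ T, d j * (D.a j k : ℚ) = d k * (D.a k j : ℚ))
    {w : AddAut (P I)} (hw : w ∈ Subgroup.closure (D.refl '' J)) :
    ∀ x y : P I, D.BQ T d (iota (w x)) (iota (w y)) = D.BQ T d (iota x) (iota y) := by
  induction hw using Subgroup.closure_induction with
  | mem g hg =>
      obtain ⟨j, hj, rfl⟩ := hg
      exact fun x y => D.BQ_refl_invariant hsym (hJT j hj) x y
  | one => intro x y; rfl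
  | mul a b ha hb iha ihb =>
      intro x y
      have h1 : (a * b) x = a (b x) := rfl
      have h2 : (a * b) y = a (b y) := rfl
      rw [h1, h2, iha (b x) (b y), ihb x y]
  | inv a ha ih =>
      intro x y
      have := ih (a⁻¹ x) (a⁻¹ y)
      have ha1 : a (a⁻¹ x) = x := a.apply_symm_apply x
      have ha2 : a (a⁻¹ y) = y := a.apply_symm_apply y
      rw [ha1, ha2] at this
      exact this.symm

lemma closure_diff (J : Set I) (hJT : ∀ j ∈ J, j ∈ T)
    {w : AddAut (P I)} (hw : w ∈ Subgroup.closure (D.refl '' J)) :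
    ∀ x : P I, (w x - x).1 = 0 ∧ ∀ k, k ∉ T → (w x - x).2 k = 0 := by
  induction hw using Subgroup.closure_induction with
  | mem g hg =>
      obtain ⟨j, hj, rfl⟩ := hg
      intro x
      have h1 : D.refl j x - x = -(D.coroot j x • alphaRt j) := by
        rw [D.refl_apply]
        abel
      rw [h1]
      constructor
      · simp [alphaRt]
      · intro k hk
        have hkj : k ≠ j := fun h => hk (h ▸ hJT j hj)
        simp [alphaRt, Pi.single_apply, hkj]
  | one =>
      intro x
      exact ⟨sub_self _, fun k _ => sub_self _⟩
  | mul a b ha hb iha ihb =>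
      intro x
      have h1 : (a * b) x - x = (a (b x) - b x) + (b x - x) := by
        have : (a * b) x = a (b x) := rfl
        rw [this]
        abel
      rw [h1]
      obtain ⟨g1, g2⟩ := iha (b x)
      obtain ⟨h1', h2'⟩ := ihb x
      constructor
      · rw [Prod.fst_add, g1, h1', add_zero]
      · intro k hk
        rw [Prod.snd_add, Pi.add_apply, g2 k hk, h2' k hk, add_zero]
  | inv a ha ih =>
      intro x
      have h1 : a⁻¹ x - x = -(a (a⁻¹ x) - a⁻¹ x) := by
        have : a (a⁻¹ x) = x := a.apply_symm_apply x
        rw [this]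
        abel
      rw [h1]
      obtain ⟨g1, g2⟩ := ih (a⁻¹ x)
      constructor
      · rw [Prod.fst_neg, g1, neg_zero]
      · intro k hk
        rw [Prod.snd_neg, Pi.neg_apply, g2 k hk, neg_zero]

lemma orbit_finite (J : Set I) (hJ : J ≠ Set.univ) (lam : P I) :
    {mu : P I | ∃ w ∈ Subgroup.closure (D.refl '' J), w lam = mu}.Finite := by
  classical
  have hI : Nonempty I := by
    by_contra h
    rw [not_nonempty_iff] at h
    exact hJ (Set.eq_univ_of_forall fun i => (h.elim i))
  set T : Finset I := (Set.toFinite J).toFinset with hT_def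
  have hmemT : ∀ j, j ∈ T ↔ j ∈ J := fun j => Set.Finite.mem_toFinset _
  have hJT : ∀ j ∈ J, j ∈ T := fun j hj => (hmemT j).mpr hj
  have hTu : T ≠ Finset.univ := by
    intro h
    apply hJ
    ext i
    simp only [Set.mem_univ, iff_true]
    exact (hmemT i).mp (h ▸ Finset.mem_univ i)
  obtain ⟨d, hd, hsym⟩ := D.symmetrizer T hTu
  choose gd hgd_supp hgd_dual using D.exists_dual hTu hd hsym
  -- uniform bound on the dual vectors
  set K : ℚ := (∑ j ∈ T.attach, D.BQ T d ((0:I→ℚ), gd j.1 j.2) ((0:I→ℚ), gd j.1 j.2)) + 1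
    with hK_def
  have hterm_nonneg : ∀ j : {x // x ∈ T},
      0 ≤ D.BQ T d ((0:I→ℚ), gd j.1 j.2) ((0:I→ℚ), gd j.1 j.2) :=
    fun j => (D.BQ_posdef hTu hd hsym (gd j.1 j.2) (hgd_supp j.1 j.2)).1
  have hK1 : 1 ≤ K := by
    rw [hK_def]
    have : 0 ≤ ∑ j ∈ T.attach, D.BQ T d ((0:I→ℚ), gd j.1 j.2) ((0:I→ℚ), gd j.1 j.2) :=
      Finset.sum_nonneg fun j _ => hterm_nonneg j
    linarith
  have hKb : ∀ (j : I) (hj : j ∈ T),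
      D.BQ T d ((0:I→ℚ), gd j hj) ((0:I→ℚ), gd j hj) ≤ K := by
    intro j hj
    rw [hK_def]
    have h1 := Finset.single_le_sum (f := fun j : {x // x ∈ T} =>
        D.BQ T d ((0:I→ℚ), gd j.1 j.2) ((0:I→ℚ), gd j.1 j.2))
      (fun j _ => hterm_nonneg j) (Finset.mem_attach T ⟨j, hj⟩)
    linarith
  -- linear coefficients coming from lam
  set L : I → ℚ := fun k => eT T d k * (iota lam).1 k + ∑ j, D.bq T d j k * (iota lam).2 j
    with hL_def
  set C1 : ℚ := ∑ k, |L k| with hC1_def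
  have hC1 : 0 ≤ C1 := Finset.sum_nonneg fun k _ => abs_nonneg _
  set Mb : ℚ := 2 * K * C1 with hMb_def
  have hMb : 0 ≤ Mb := by rw [hMb_def]; nlinarith
  set N : ℤ := ⌈Mb⌉ with hN_def
  have hN : Mb ≤ (N : ℚ) := Int.le_ceil Mb
  apply Set.Finite.subset (Set.Finite.image (fun c : I → ℤ => lam + ((0 : I → ℤ), c))
    (Set.Finite.pi (fun _ : I => Set.finite_Icc (-N) N)))
  rintro mu ⟨w, hw, rfl⟩
  set q : P I := w lam - lam with hq_def
  obtain ⟨hq1, hq2⟩ := D.closure_diff J hJT hw lam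
  have hq0 : ((0 : I → ℤ), q.2) = q := Prod.ext_iff.mpr ⟨hq1.symm, rfl⟩
  have hmu_eq : w lam = lam + ((0 : I → ℤ), q.2) := by
    rw [hq0, hq_def]
    abel
  set cb : I → ℚ := fun k => ((q.2 k : ℤ) : ℚ) with hcb_def
  have hcb_supp : ∀ k, k ∉ T → cb k = 0 := by
    intro k hk
    have h0 : q.2 k = 0 := hq2 k hk
    simp [hcb_def, h0]
  have hiota : iota (w lam) = iota lam + ((0 : I → ℚ), cb) := by
    rw [hmu_eq, iota_add]
    have h0 : iota ((0 : I → ℤ), q.2) = ((0 : I → ℚ), cb) := by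
      unfold iota
      refine Prod.ext_iff.mpr ⟨?_, ?_⟩ <;> funext i <;> simp [hcb_def]
    rw [h0]
  have hinv := D.BQ_closure_invariant J hJT hsym hw lam lam
  rw [hiota] at hinv
  rw [D.BQ_add_left, D.BQ_add_right hsym, D.BQ_add_right hsym] at hinv
  have hsz : D.BQ T d ((0 : I → ℚ), cb) (iota lam)
      = D.BQ T d (iota lam) ((0 : I → ℚ), cb) := D.BQ_symm hsym _ _
  have hcond : D.BQ T d ((0 : I → ℚ), cb) ((0 : I → ℚ), cb)
      = -2 * D.BQ T d (iota lam) ((0 : I → ℚ), cb) := by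
    rw [hsz] at hinv
    linarith
  have hlin : D.BQ T d (iota lam) ((0 : I → ℚ), cb) = ∑ k, L k * cb k := by
    rw [D.BQ_right_coords]
  have hm_all : ∀ k, |cb k| ≤ Finset.univ.sup' Finset.univ_nonempty (fun k => |cb k|) :=
    fun k => Finset.le_sup' (fun k => |cb k|) (Finset.mem_univ k)
  set m : ℚ := Finset.univ.sup' Finset.univ_nonempty (fun k => |cb k|) with hm_def
  have hm0 : 0 ≤ m := le_trans (abs_nonneg _) (hm_all hI.some)
  have hQz_nonneg : 0 ≤ D.BQ T d ((0 : I → ℚ), cb) ((0 : I → ℚ), cb) :=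
    (D.BQ_posdef hTu hd hsym cb hcb_supp).1
  have habs : |∑ k, L k * cb k| ≤ C1 * m := by
    calc |∑ k, L k * cb k| ≤ ∑ k, |L k * cb k| := Finset.abs_sum_le_sum_abs _ _
      _ = ∑ k, |L k| * |cb k| := by
          apply Finset.sum_congr rfl
          intro k _
          rw [abs_mul]
      _ ≤ ∑ k, |L k| * m := Finset.sum_le_sum fun k _ =>
          mul_le_mul_of_nonneg_left (hm_all k) (abs_nonneg _)
      _ = C1 * m := by rw [hC1_def, Finset.sum_mul]
  have hSz : D.BQ T d ((0 : I → ℚ), cb) ((0 : I → ℚ), cb) ≤ 2 * C1 * m := by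
    rw [hcond, hlin]
    have := neg_abs_le (∑ k, L k * cb k)
    linarith
  have hm_le : m ≤ Mb := by
    by_cases hmz : m ≤ 0
    · linarith
    · push_neg at hmz
      obtain ⟨k0, _, hk0⟩ := Finset.exists_mem_eq_sup' Finset.univ_nonempty
        (fun k => |cb k|)
      rw [← hm_def] at hk0
      have hcbk0 : cb k0 ≠ 0 := by
        intro h
        rw [hk0, h, abs_zero] at hmz
        exact lt_irrefl 0 hmz
      have hk0T : k0 ∈ T := by
        by_contra h
        exact hcbk0 (hcb_supp k0 h)
      have hdual := hgd_dual k0 hk0T cb hcb_supp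
      have hcs := D.BQ_cs hTu hd hsym (gd k0 hk0T) cb (hgd_supp k0 hk0T) hcb_supp
      rw [hdual] at hcs
      have hgK := hKb k0 hk0T
      have h1 : (cb k0)^2 ≤ K * (2 * C1 * m) :=
        le_trans hcs (mul_le_mul hgK hSz hQz_nonneg (le_trans zero_le_one hK1))
      have hm2 : m^2 ≤ K * (2 * C1 * m) := by
        have he : m^2 = (cb k0)^2 := by rw [hk0, sq_abs]
        rw [he]
        exact h1
      rw [hMb_def]
      nlinarith
  refine ⟨q.2, ?_, hmu_eq.symm⟩
  intro k _
  have h1 : |cb k| ≤ (N : ℚ) := le_trans (hm_all k) (le_trans hm_le hN)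
  have h2 : |(q.2 k : ℚ)| ≤ (N : ℚ) := h1
  have h3 : |q.2 k| ≤ N := by exact_mod_cast h2
  have h4 := abs_le.mp h3
  exact Set.mem_Icc.mpr h4

end AffineData
lemma pspan (x : P I) : x = (∑ i, x.1 i • Lambda i) + ∑ i, x.2 i • alphaRt i := by
  have hL : ∀ (c : I → ℤ), (∑ i, c i • Lambda i : P I) = (c, 0) := by
    intro c
    refine Prod.ext_iff.mpr ⟨?_, ?_⟩
    · rw [Prod.fst_sum]
      funext j
      rw [Finset.sum_apply]
      simp only [Lambda, Prod.smul_fst, Pi.smul_apply, Pi.single_apply, smul_eq_mul,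
        mul_ite, mul_one, mul_zero]
      rw [Finset.sum_ite_eq Finset.univ j c]
      simp
    · rw [Prod.snd_sum]
      simp [Lambda]
  have hA : ∀ (c : I → ℤ), (∑ i, c i • alphaRt i : P I) = (0, c) := by
    intro c
    refine Prod.ext_iff.mpr ⟨?_, ?_⟩
    · rw [Prod.fst_sum]
      simp [alphaRt]
    · rw [Prod.snd_sum]
      funext j
      rw [Finset.sum_apply]
      simp only [alphaRt, Prod.smul_snd, Pi.smul_apply, Pi.single_apply, smul_eq_mul,
        mul_ite, mul_one, mul_zero]
      rw [Finset.sum_ite_eq Finset.univ j c]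
      simp
  rw [hL, hA]
  refine Prod.ext_iff.mpr ⟨?_, ?_⟩ <;> simp

lemma addAut_eq_of_basis (w w' : AddAut (P I))
    (h1 : ∀ i, w (Lambda i) = w' (Lambda i))
    (h2 : ∀ i, w (alphaRt i) = w' (alphaRt i)) : w = w' := by
  apply AddEquiv.ext
  intro x
  have e1 : w x = (∑ i, x.1 i • w (Lambda i)) + ∑ i, x.2 i • w (alphaRt i) := by
    conv_lhs => rw [pspan x]
    simp only [map_add, map_sum, map_zsmul]
  have e2 : w' x = (∑ i, x.1 i • w' (Lambda i)) + ∑ i, x.2 i • w' (alphaRt i) := by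
    conv_lhs => rw [pspan x]
    simp only [map_add, map_sum, map_zsmul]
  rw [e1, e2]
  simp only [h1, h2]

lemma weylJ_finite (D : AffineData I) (J : Set I) (hJ : J ≠ Set.univ) :
    Finite (Subgroup.closure (D.refl '' J) : Subgroup (AddAut (P I))) := by
  classical
  set GJ := (Subgroup.closure (D.refl '' J) : Subgroup (AddAut (P I))) with hGJ
  have horb : ∀ lam : P I,
      {mu : P I | ∃ w ∈ Subgroup.closure (D.refl '' J), w lam = mu}.Finite :=
    D.orbit_finite J hJ
  haveI hfin1 : ∀ i : I,
      Finite ({mu : P I | ∃ w ∈ Subgroup.closure (D.refl '' J), w (Lambda i) = mu}) :=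
    fun i => (horb (Lambda i)).to_subtype
  haveI hfin2 : ∀ i : I,
      Finite ({mu : P I | ∃ w ∈ Subgroup.closure (D.refl '' J), w (alphaRt i) = mu}) :=
    fun i => (horb (alphaRt i)).to_subtype
  let Φ : GJ → (∀ i : I,
        {mu : P I | ∃ w ∈ Subgroup.closure (D.refl '' J), w (Lambda i) = mu}) ×
      (∀ i : I, {mu : P I | ∃ w ∈ Subgroup.closure (D.refl '' J), w (alphaRt i) = mu}) :=
    fun w => (fun i => ⟨(w : AddAut (P I)) (Lambda i), ⟨w, w.2, rfl⟩⟩,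
      fun i => ⟨(w : AddAut (P I)) (alphaRt i), ⟨w, w.2, rfl⟩⟩)
  have hΦinj : Function.Injective Φ := by
    intro w w' h
    rw [Prod.ext_iff] at h
    obtain ⟨ha, hb⟩ := h
    apply Subtype.ext
    apply addAut_eq_of_basis
    · intro i
      have := congrFun ha i
      exact Subtype.ext_iff.mp this
    · intro i
      have := congrFun hb i
      exact Subtype.ext_iff.mp this
  exact Finite.of_injective Φ hΦinj
/-- Proposition (van (i)): if `J` is a proper subset of `I` and `W_J` is the subgroup of `W`
generated by the `s_i`, `i ∈ J`, then `H¹(W_J, ℤ[P]) = 0`; that is, every 1-cocycle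
`f : W_J → ℤ[P]` is a 1-coboundary. -/
theorem H1_vanishing_parabolic (D : AffineData I) (J : Set I) (hJ : J ≠ Set.univ)
    (f : (Subgroup.closure (D.refl '' J) : Subgroup (AddAut (P I))) → ZP I)
    (hf : ∀ g h : (Subgroup.closure (D.refl '' J) : Subgroup (AddAut (P I))),
      f (g * h) = f g + wact (g : AddAut (P I)) (f h)) :
    ∃ u : ZP I, ∀ w : (Subgroup.closure (D.refl '' J) : Subgroup (AddAut (P I))),
      f w = wact (w : AddAut (P I)) u - u := by
  classical
  haveI : Finite (Subgroup.closure (D.refl '' J) : Subgroup (AddAut (P I))) :=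
    weylJ_finite D J hJ
  haveI : Fintype (Subgroup.closure (D.refl '' J) : Subgroup (AddAut (P I))) :=
    Fintype.ofFinite _
  set n : ℕ := Fintype.card (Subgroup.closure (D.refl '' J) : Subgroup (AddAut (P I)))
    with hn
  have hn0 : 0 < n := Fintype.card_pos
  have hnz : (n : ℤ) ≠ 0 := by exact_mod_cast hn0.ne'
  set M : ZP I := -∑ g : (Subgroup.closure (D.refl '' J) : Subgroup (AddAut (P I))), f g
    with hM
  have hwact_coeff : ∀ (w : AddAut (P I)) (u : ZP I) (x : P I),
      (wact w u).coeff x = u.coeff (w⁻¹ x) := by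
    intro w u x
    have h1 : (wact w u).coeff = Finsupp.mapDomain (⇑w) u.coeff := rfl
    rw [h1]
    have h2 : x = w (w⁻¹ x) := (w.apply_symm_apply x).symm
    conv_lhs => rw [h2]
    exact Finsupp.mapDomain_apply (AddEquiv.injective w) u.coeff _
  have key : ∀ (h : (Subgroup.closure (D.refl '' J) : Subgroup (AddAut (P I)))) (x : P I),
      (n : ℤ) * (f h).coeff x = M.coeff ((h : AddAut (P I))⁻¹ x) - M.coeff x := by
    intro h x
    set S : ZP I := ∑ g : (Subgroup.closure (D.refl '' J) : Subgroup (AddAut (P I))), f g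
      with hS_def
    have hsum : (∑ g : (Subgroup.closure (D.refl '' J) : Subgroup (AddAut (P I))),
        f (h * g)) = S := by
      rw [hS_def]
      apply Fintype.sum_equiv (Equiv.mulLeft h) _ f
      intro g
      rfl
    have hco : (∑ g : (Subgroup.closure (D.refl '' J) : Subgroup (AddAut (P I))),
        f (h * g)) = n • f h + wact (h : AddAut (P I)) S := by
      rw [Finset.sum_congr rfl fun g _ => hf h g, Finset.sum_add_distrib,
        Finset.sum_const, Finset.card_univ, hS_def, map_sum]
    have hS : S = n • f h + wact (h : AddAut (P I)) S := hsum.symm.trans hco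
    have hws : wact (h : AddAut (P I)) S = S - n • f h := eq_sub_of_add_eq' hS.symm
    have hM2 : wact (h : AddAut (P I)) M - M = (n : ℤ) • f h := by
      rw [hM, map_neg, hws, natCast_zsmul]
      abel
    have h5 : (wact (h : AddAut (P I)) M - M).coeff x = ((n : ℤ) • f h).coeff x := by rw [hM2]
    rw [AddMonoidAlgebra.coeff_sub, Finsupp.sub_apply, hwact_coeff,
      AddMonoidAlgebra.coeff_smul_apply, smul_eq_mul] at h5
    rw [← h5]
  -- orbit representatives
  letI s : Setoid (P I) :=
    ⟨fun x y => ∃ g : (Subgroup.closure (D.refl '' J) : Subgroup (AddAut (P I))),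
        (g : AddAut (P I)) x = y,
     ⟨fun x => ⟨1, rfl⟩,
      fun {x y} h => by
        obtain ⟨g, hg⟩ := h
        exact ⟨g⁻¹, by rw [← hg]; exact (g : AddAut (P I)).symm_apply_apply x⟩,
      fun {x y z} h h' => by
        obtain ⟨g, hg⟩ := h
        obtain ⟨g', hg'⟩ := h'
        exact ⟨g' * g, by rw [← hg', ← hg]; rfl⟩⟩⟩
  let rep : P I → P I := fun x => (⟦x⟧ : Quotient s).out
  have hrep_rel : ∀ x, ∃ g : (Subgroup.closure (D.refl '' J) : Subgroup (AddAut (P I))),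
      (g : AddAut (P I)) (rep x) = x := by
    intro x
    exact Quotient.exact (Quotient.out_eq (⟦x⟧ : Quotient s))
  have hrep_eq : ∀ (x : P I) (g : (Subgroup.closure (D.refl '' J) :
      Subgroup (AddAut (P I)))), rep ((g : AddAut (P I)) x) = rep x := by
    intro x g
    have h1 : (⟦(g : AddAut (P I)) x⟧ : Quotient s) = ⟦x⟧ :=
      Quotient.sound ⟨g⁻¹, (g : AddAut (P I)).symm_apply_apply x⟩
    show (⟦(g : AddAut (P I)) x⟧ : Quotient s).out = (⟦x⟧ : Quotient s).out
    rw [h1]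
  have hdvd : ∀ (g : (Subgroup.closure (D.refl '' J) : Subgroup (AddAut (P I))))
      (x : P I), (n : ℤ) ∣ M.coeff ((g : AddAut (P I)) x) - M.coeff x := by
    intro g x
    refine ⟨(f g⁻¹).coeff x, ?_⟩
    have h1 := key g⁻¹ x
    have h2 : ((g⁻¹ : (Subgroup.closure (D.refl '' J) : Subgroup (AddAut (P I)))) :
        AddAut (P I))⁻¹ = (g : AddAut (P I)) := by
      simp
    rw [h2] at h1
    exact h1.symm
  have hdvd_rep : ∀ x : P I, (n : ℤ) ∣ M.coeff x - M.coeff (rep x) := by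
    intro x
    obtain ⟨g, hg⟩ := hrep_rel x
    have := hdvd g (rep x)
    rw [hg] at this
    exact this
  -- the primitive
  set v : P I → ℤ := fun x => (M.coeff x - M.coeff (rep x)) / (n : ℤ) with hv
  have hv_supp : (Function.support v).Finite := by
    apply Set.Finite.subset (Set.Finite.union (M.coeff.support.finite_toSet)
      (Set.Finite.biUnion (M.coeff.support.finite_toSet)
        (fun y _ => D.orbit_finite J hJ y)))
    intro x hx
    by_cases h1 : M.coeff x = 0
    · by_cases h2 : M.coeff (rep x) = 0
      · exfalso
        apply hx
        rw [hv]
        simp only [h1, h2, sub_zero, sub_self]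
        exact Int.zero_ediv _
      · right
        obtain ⟨g, hg⟩ := hrep_rel x
        exact Set.mem_biUnion (Finsupp.mem_support_iff.mpr h2)
          ⟨(g : AddAut (P I)), g.2, hg⟩
    · left
      exact Finsupp.mem_support_iff.mpr h1
  refine ⟨AddMonoidAlgebra.ofCoeff (Finsupp.ofSupportFinite v hv_supp), ?_⟩
  intro w
  have hu : ∀ y : P I,
      (AddMonoidAlgebra.ofCoeff (Finsupp.ofSupportFinite v hv_supp) : ZP I).coeff y = v y := by
    intro y
    rw [AddMonoidAlgebra.coeff_ofCoeff, Finsupp.ofSupportFinite_coe]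
  apply AddMonoidAlgebra.ext
  apply Finsupp.ext
  intro x
  rw [AddMonoidAlgebra.coeff_sub, Finsupp.sub_apply, hwact_coeff, hu, hu]
  obtain ⟨k1, hk1⟩ := hdvd_rep ((w : AddAut (P I))⁻¹ x)
  obtain ⟨k2, hk2⟩ := hdvd_rep x
  have hrep' : rep ((w : AddAut (P I))⁻¹ x) = rep x := by
    have h1 := hrep_eq ((w : AddAut (P I))⁻¹ x) w
    have h2 : (w : AddAut (P I)) ((w : AddAut (P I))⁻¹ x) = x :=
      (w : AddAut (P I)).apply_symm_apply x
    rw [h2] at h1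
    exact h1.symm
  have hv1 : v ((w : AddAut (P I))⁻¹ x) = k1 := by
    rw [hv]
    simp only [hk1]
    exact Int.mul_ediv_cancel_left k1 hnz
  have hv2 : v x = k2 := by
    rw [hv]
    simp only [hk2]
    exact Int.mul_ediv_cancel_left k2 hnz
  rw [hv1, hv2]
  have hkey := key w x
  rw [hrep'] at hk1
  have h3 : (n : ℤ) * (f w).coeff x = (n : ℤ) * (k1 - k2) := by
    rw [hkey]
    have : M.coeff ((w : AddAut (P I))⁻¹ x) - M.coeff x
        = (M.coeff ((w : AddAut (P I))⁻¹ x) - M.coeff (rep x)) - (M.coeff x - M.coeff (rep x)) := by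
      abel
    rw [this, hk1, hk2]
    ring
  exact mul_left_cancel₀ hnz h3

end AffineKM
end
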